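/- arXiv:2501.00667 — 10 statements merged into one kernel-verified Lean document; each statement's English description precedes it below -/
import Mathlib

section
/- Let x, y, z be positive integers and suppose that x·y·z divides (x+y+z)². Then b := (x+y+z)²/(x·y·z) satisfies b ≤ 9 and b ≠ 7. -/
set_option maxHeartbeats 1200000 in
theorem vieta_key : ∀ n : ℕ, ∀ x y z b : ℤ, 0 < x → 0 < y → 0 < z → x ≤ y → y ≤ z →
    b * (x * y * z) = (x + y + z) ^ 2 → x + y + z ≤ (n : ℤ) → b ≤ 9 ∧ b ≠ 7 := by
  intro n
  induction n using Nat.strong_induction_on with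
  | _ n ih =>
    intro x y z b hx hy hz hxy hyz heq hsum
    rcases le_or_gt z (x + y) with hle | hlt
    · constructor
      · by_contra hb
        push_neg at hb
        have hb10 : 10 ≤ b := hb
        have step2 : b * (x * y) * z ≤ 9 * z * z := by nlinarith
        have step3 : b * (x * y) ≤ 9 * z := le_of_mul_le_mul_right step2 hz
        have step4 : b * x * y ≤ 18 * y := by nlinarith
        have step5 : b * x ≤ 18 := le_of_mul_le_mul_right step4 hy
        have hx1 : x = 1 := by nlinarith
        subst hx1
        have h4 : (1 + y + z) ^ 2 ≤ 4 * (1 + y) ^ 2 := by nlinarith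
        have h5 : 10 * (y * z) ≤ b * (y * z) := by nlinarith [mul_pos hy hz]
        have hy1 : y = 1 := by nlinarith
        subst hy1
        interval_cases z <;> omega
      · rintro rfl
        have step2 : 7 * (x * y) * z ≤ 9 * z * z := by nlinarith
        have step3 : 7 * (x * y) ≤ 9 * z := le_of_mul_le_mul_right step2 hz
        have step4 : 7 * x * y ≤ 18 * y := by nlinarith
        have step5 : 7 * x ≤ 18 := le_of_mul_le_mul_right step4 hy
        have hx2 : x ≤ 2 := by linarith
        interval_cases x
        · rcases (by omega : z = y ∨ z = y + 1) with h | h <;>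
            rcases (by omega : y = 1 ∨ 2 ≤ y) with h2 | h2 <;>
            nlinarith [heq, h, sq_nonneg (y - 2)]
        · rcases (by omega : z = y ∨ z = y + 1 ∨ z = y + 2) with h | h | h <;>
            nlinarith [heq, h]
    · -- descent
      obtain ⟨w, hw⟩ : ∃ w : ℤ, w = b * x * y - 2 * (x + y) - z := ⟨_, rfl⟩
      have hw1 : z * w = (x + y) ^ 2 := by rw [hw]; linear_combination heq
      have hspos : 0 < x + y := by linarith
      have hwpos : 0 < w := by
        by_contra hc
        push_neg at hc
        nlinarith [hw1, mul_pos hspos hspos, mul_nonpos_of_nonneg_of_nonpos hz.le hc]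
      have hwlt : w < x + y := by
        by_contra hc
        push_neg at hc
        have h1 : (x + y) * (x + y) < z * (x + y) := by
          exact mul_lt_mul_of_pos_right hlt hspos
        have h2 : z * (x + y) ≤ z * w := mul_le_mul_of_nonneg_left hc hz.le
        have h3 : (x + y) ^ 2 = (x + y) * (x + y) := by ring
        linarith [hw1]
      have heq' : b * (x * y * w) = (x + y + w) ^ 2 := by rw [hw]; linear_combination heq
      have hwz : w < z := by linarith
      have hn3 : (3 : ℤ) ≤ (n : ℤ) := by linarith
      have hn : 1 ≤ n := by omega
      have hsum' : x + y + w ≤ ((n - 1 : ℕ) : ℤ) := by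
        have : x + y + w < x + y + z := by linarith
        omega
      rcases le_total w x with h1 | h1
      · exact ih (n - 1) (by omega) w x y b hwpos hx hy h1 hxy
          (by linear_combination heq') (by linarith)
      · rcases le_total w y with h2 | h2
        · exact ih (n - 1) (by omega) x w y b hx hwpos hy h1 h2
            (by linear_combination heq') (by linarith)
        · exact ih (n - 1) (by omega) x y w b hx hy hwpos hxy h2
            (by linear_combination heq') (by linarith)

theorem vieta_key_wrap (x y z b : ℤ) (hx : 0 < x) (hy : 0 < y) (hz : 0 < z)
    (heq : b * (x * y * z) = (x + y + z) ^ 2) : b ≤ 9 ∧ b ≠ 7 := by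
  rcases le_total x y with h1 | h1 <;> rcases le_total y z with h2 | h2 <;>
    rcases le_total x z with h3 | h3
  · exact vieta_key (x + y + z).toNat x y z b hx hy hz h1 h2
      (by linear_combination heq) (by omega)
  · exact vieta_key (x + y + z).toNat z x y b hz hx hy h3 h1
      (by linear_combination heq) (by omega)
  · exact vieta_key (x + y + z).toNat x z y b hx hz hy h3 h2
      (by linear_combination heq) (by omega)
  · exact vieta_key (x + y + z).toNat z x y b hz hx hy h3 h1
      (by linear_combination heq) (by omega)
  · exact vieta_key (x + y + z).toNat y x z b hy hx hz h1 h3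
      (by linear_combination heq) (by omega)
  · exact vieta_key (x + y + z).toNat y z x b hy hz hx h2 h3
      (by linear_combination heq) (by omega)
  · exact vieta_key (x + y + z).toNat z y x b hz hy hx h2 h1
      (by linear_combination heq) (by omega)
  · exact vieta_key (x + y + z).toNat z y x b hz hy hx h2 h1
      (by linear_combination heq) (by omega)



/-- Let x, y, z be positive integers and suppose that x·y·z divides
(x+y+z)². Then b := (x+y+z)²/(x·y·z) satisfies b ≤ 9 and b ≠ 7. -/
theorem stmt_0 (x y z : ℤ) (hx : 0 < x) (hy : 0 < y) (hz : 0 < z)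
    (hdvd : x * y * z ∣ (x + y + z) ^ 2) :
    (x + y + z) ^ 2 / (x * y * z) ≤ 9 ∧ (x + y + z) ^ 2 / (x * y * z) ≠ 7 := by
  obtain ⟨b, hb⟩ := hdvd
  have hxyz : x * y * z ≠ 0 := by positivity
  rw [hb, Int.mul_ediv_cancel_left _ hxyz]
  exact vieta_key_wrap x y z b hx hy hz (by linarith)
end

section
/- Let n ≥ 2 be an integer and let x₁, …, xₙ be positive integers such that the product x₁⋯xₙ divides (x₁ + ⋯ + xₙ)². Then the integer b := (x₁ + ⋯ + xₙ)²/(x₁⋯xₙ) satisfies b ≤ n². -/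
/-!
Vieta jumping. Fix `c` with `(∑ x) ^ 2 = c * ∏ x` and let `a` be a largest entry, `t` the sum and
`q` the product of the others. If `t < a`, the other root `t ^ 2 / a < a` of
`(X + t) ^ 2 = c * q * X` replaces `a` by a smaller positive integer with the same `c`. So it
suffices to bound `c` when `a ≤ t`; then with `b` the second largest entry,
`b ≤ a ≤ (n - 1) b`, hence `(∑ x) ^ 2 ≤ (a + (n - 1) b) ^ 2 ≤ n ^ 2 a b ≤ n ^ 2 ∏ x`.
-/

open Finset

variable {R : Type*} [CommRing R] [LinearOrder R] [IsStrictOrderedRing R]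

/-- `(k + 1) ^ 2 * (a * b) - (a + k * b) ^ 2 = (a - b) * (k ^ 2 * b - a)`. -/
lemma sq_add_mul_le_mul {a b k : R} (hk : 1 ≤ k) (hba : b ≤ a) (hab : a ≤ k * b) :
    (a + k * b) ^ 2 ≤ (k + 1) ^ 2 * (a * b) := by
  have hkb : k * b ≤ k ^ 2 * b := by nlinarith
  nlinarith [mul_nonneg (sub_nonneg.2 hba) (sub_nonneg.2 (hab.trans hkb))]

/-- The other root `c * q - 2 * t - a = t ^ 2 / a` of `(X + t) ^ 2 = c * (X * q)`. -/
lemma vieta_jump {a t q c : R} (ht : 0 < t) (hta : t < a) (h : (a + t) ^ 2 = c * (a * q)) :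
    ∃ a', 0 < a' ∧ a' < a ∧ (a' + t) ^ 2 = c * (a' * q) := by
  have hroots : a * (c * q - 2 * t - a) = t ^ 2 := by linear_combination -h
  refine ⟨c * q - 2 * t - a, ?_, ?_, by linear_combination -hroots⟩
  · nlinarith
  · nlinarith

section

variable {ι : Type*} [DecidableEq ι] {s : Finset ι} {x : ι → ℤ}

lemma sq_sum_le_card_sq_mul_prod_of_le_sum_erase (hx : ∀ k ∈ s, 0 < x k) {i j : ι}
    (hi : i ∈ s) (hj : j ∈ s.erase i) (hxi : ∀ k ∈ s, x k ≤ x i)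
    (hxj : ∀ k ∈ s.erase i, x k ≤ x j) (hle : x i ≤ ∑ k ∈ s.erase i, x k) :
    (∑ k ∈ s, x k) ^ 2 ≤ (#s : ℤ) ^ 2 * ∏ k ∈ s, x k := by
  set t := (s.erase i).erase j
  have ht : ∀ k ∈ t, 0 < x k := fun k hk => hx k (mem_of_mem_erase (mem_of_mem_erase hk))
  have hsum_erase : ∑ k ∈ s.erase i, x k = x j + ∑ k ∈ t, x k := (add_sum_erase _ _ hj).symm
  have hcard : #s = #t + 1 + 1 := by rw [← card_erase_add_one hi, ← card_erase_add_one hj]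
  have hsum_t : ∑ k ∈ t, x k ≤ #t * x j := by
    simpa using sum_le_card_nsmul t x (x j) fun k hk => hxj k (mem_of_mem_erase hk)
  have hsum_t_nonneg : 0 ≤ ∑ k ∈ t, x k := sum_nonneg fun k hk => (ht k hk).le
  have hprod_t : 1 ≤ ∏ k ∈ t, x k := Order.one_le_iff_pos.2 (prod_pos ht)
  have hxi_pos := hx i hi
  have hxj_pos := hx j (mem_of_mem_erase hj)
  rw [← add_sum_erase _ _ hi, hsum_erase, ← mul_prod_erase _ _ hi, ← mul_prod_erase _ _ hj, hcard]
  push_cast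
  calc (x i + (x j + ∑ k ∈ t, x k)) ^ 2 ≤ (x i + (#t + 1) * x j) ^ 2 := by
        gcongr
        linarith
    _ ≤ (#t + 1 + 1) ^ 2 * (x i * x j) :=
        sq_add_mul_le_mul (by simp) (hxi j (mem_of_mem_erase hj)) (by linarith)
    _ ≤ (#t + 1 + 1) ^ 2 * (x i * x j * ∏ k ∈ t, x k) :=
        mul_le_mul_of_nonneg_left
          (le_mul_of_one_le_right (by positivity) hprod_t) (by positivity)
    _ = (#t + 1 + 1) ^ 2 * (x i * (x j * ∏ k ∈ t, x k)) := by ring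

lemma le_card_sq_of_sq_sum_eq_mul_prod (hs : 2 ≤ #s) {c : ℤ} (hx : ∀ k ∈ s, 0 < x k)
    (h : (∑ k ∈ s, x k) ^ 2 = c * ∏ k ∈ s, x k) : c ≤ #s ^ 2 := by
  obtain ⟨N, hN⟩ : ∃ N : ℕ, (∑ k ∈ s, x k).toNat = N := ⟨_, rfl⟩
  induction N using Nat.strong_induction_on generalizing x with
  | _ N ih =>
    obtain ⟨i, hi, hxi⟩ := exists_max_image s x (card_pos.1 (by omega))
    have hne : (s.erase i).Nonempty := by rw [← card_pos, card_erase_of_mem hi]; omega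
    have hrest_pos : 0 < ∑ k ∈ s.erase i, x k :=
      sum_pos (fun k hk => hx k (mem_of_mem_erase hk)) hne
    by_cases hle : x i ≤ ∑ k ∈ s.erase i, x k
    · obtain ⟨j, hj, hxj⟩ := exists_max_image (s.erase i) x hne
      have hP : 0 < ∏ k ∈ s, x k := prod_pos hx
      refine le_of_mul_le_mul_right ?_ hP
      rw [← h]
      exact sq_sum_le_card_sq_mul_prod_of_le_sum_erase hx hi hj hxi hxj hle
    · rw [← add_sum_erase _ _ hi, ← mul_prod_erase _ _ hi] at h
      obtain ⟨a, ha, hai, ha_eq⟩ := vieta_jump hrest_pos (not_le.1 hle) h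
      have hsum : ∑ k ∈ s, Function.update x i a k = a + ∑ k ∈ s.erase i, x k := by
        rw [sum_update_of_mem hi, sdiff_singleton_eq_erase]
      have hprod : ∏ k ∈ s, Function.update x i a k = a * ∏ k ∈ s.erase i, x k := by
        rw [prod_update_of_mem hi, sdiff_singleton_eq_erase]
      refine ih _ ?_ (x := Function.update x i a) ?_ (by rw [hsum, hprod, ha_eq]) rfl
      · rw [hsum, ← hN, ← add_sum_erase _ _ hi]
        omega
      · intro k hk
        rcases eq_or_ne k i with rfl | hki
        · simpa using ha
        · simpa [hki] using hx k hk

end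

/-- Let n ≥ 2 and x₁, …, xₙ be positive integers such that
x₁⋯xₙ divides (x₁ + ⋯ + xₙ)².  Then (x₁ + ⋯ + xₙ)²/(x₁⋯xₙ) ≤ n². -/
theorem stmt_1 (n : ℕ) (hn : 2 ≤ n) (x : Fin n → ℤ) (hx : ∀ i, 0 < x i)
    (hdvd : (∏ i, x i) ∣ (∑ i, x i) ^ 2) :
    (∑ i, x i) ^ 2 / (∏ i, x i) ≤ (n : ℤ) ^ 2 := by
  obtain ⟨c, hc⟩ := hdvd
  rw [hc, Int.mul_ediv_cancel_left _ (prod_pos fun i _ => hx i).ne']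
  simpa using le_card_sq_of_sq_sum_eq_mul_prod (s := univ) (by simpa using hn) (fun i _ => hx i)
    (hc.trans (mul_comm _ _))
end

section
/- For every positive integer j, one has (1 + F_{2j−1}² + F_{2j+1}²)² = 9 · F_{2j−1}² · F_{2j+1}², where F denotes the Fibonacci sequence. Equivalently, the triple (1, F_{2j−1}², F_{2j+1}²) satisfies (x+y+z)² = 9·x·y·z. -/
lemma fib_odd_sq_aux : ∀ n : ℕ,
    1 + Nat.fib (2 * n + 1) ^ 2 + Nat.fib (2 * n + 3) ^ 2 =
      3 * Nat.fib (2 * n + 1) * Nat.fib (2 * n + 3) := by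
  intro n
  induction n with
  | zero => simp [Nat.fib]
  | succ k ih =>
    have h1 : Nat.fib (2 * k + 5) = Nat.fib (2 * k + 4) + Nat.fib (2 * k + 3) := by
      rw [Nat.fib_add_two]; ring_nf
    have h2 : Nat.fib (2 * k + 4) = Nat.fib (2 * k + 3) + Nat.fib (2 * k + 2) := by
      rw [Nat.fib_add_two]; ring_nf
    have h3 : Nat.fib (2 * k + 3) = Nat.fib (2 * k + 2) + Nat.fib (2 * k + 1) := by
      rw [Nat.fib_add_two]; ring_nf
    have e1 : 2 * (k + 1) + 1 = 2 * k + 3 := by ring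
    have e2 : 2 * (k + 1) + 3 = 2 * k + 5 := by ring
    rw [e1, e2]
    nlinarith [ih, h1, h2, h3, Nat.fib_pos.mpr (by omega : 0 < 2 * k + 1)]

/-- For every positive integer j,
(1 + F_{2j−1}² + F_{2j+1}²)² = 9 · F_{2j−1}² · F_{2j+1}², where F is the
Fibonacci sequence (F₁ = F₂ = 1). -/
theorem stmt_2 (j : ℕ) (hj : 0 < j) :
    (1 + Nat.fib (2 * j - 1) ^ 2 + Nat.fib (2 * j + 1) ^ 2) ^ 2 =
      9 * Nat.fib (2 * j - 1) ^ 2 * Nat.fib (2 * j + 1) ^ 2 := by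
  obtain ⟨n, rfl⟩ : ∃ n, j = n + 1 := ⟨j - 1, by omega⟩
  have e1 : 2 * (n + 1) - 1 = 2 * n + 1 := by omega
  have e2 : 2 * (n + 1) + 1 = 2 * n + 3 := by ring
  rw [e1, e2, fib_odd_sq_aux n]
  ring
end

section
/- Fix a positive integer b. If the set S_b is nonempty, then S_b contains a Vieta-reduced solution, i.e., there exist positive integers x ≤ y ≤ z with z ≤ x + y and (x+y+z)² = b·x·y·z. -/
private lemma sort_sol (b x y z : ℤ) (hx : 0 < x) (hy : 0 < y) (hz : 0 < z)
    (heq : (x + y + z) ^ 2 = b * x * y * z) :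
    ∃ a c d : ℤ, 0 < a ∧ 0 < c ∧ 0 < d ∧ a ≤ c ∧ c ≤ d ∧ a + c + d = x + y + z ∧
      (a + c + d) ^ 2 = b * a * c * d := by
  rcases le_total x y with h1 | h1 <;> rcases le_total y z with h2 | h2 <;>
    rcases le_total x z with h3 | h3
  · exact ⟨x, y, z, hx, hy, hz, h1, h2, by ring, by linear_combination heq⟩
  · exact ⟨x, y, z, hx, hy, hz, h1, h2, by ring, by linear_combination heq⟩
  · exact ⟨x, z, y, hx, hz, hy, h3, h2, by ring, by linear_combination heq⟩
  · exact ⟨z, x, y, hz, hx, hy, h3, h1, by ring, by linear_combination heq⟩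
  · exact ⟨y, x, z, hy, hx, hz, h1, h3, by ring, by linear_combination heq⟩
  · exact ⟨y, z, x, hy, hz, hx, h2, h3, by ring, by linear_combination heq⟩
  · exact ⟨x, z, y, hx, hz, hy, h3, h2, by ring, by linear_combination heq⟩
  · exact ⟨z, y, x, hz, hy, hx, h2, h1, by ring, by linear_combination heq⟩

private lemma descent (b : ℤ) : ∀ n : ℕ, ∀ x y z : ℤ, 0 < x → 0 < y → 0 < z →
    (x + y + z) ^ 2 = b * x * y * z → (x + y + z).toNat ≤ n →
    ∃ x y z : ℤ, 0 < x ∧ 0 < y ∧ 0 < z ∧ x ≤ y ∧ y ≤ z ∧ z ≤ x + y ∧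
      (x + y + z) ^ 2 = b * x * y * z := by
  intro n
  induction n with
  | zero => intro x y z hx hy hz heq hn; omega
  | succ n ih =>
    intro x y z hx hy hz heq hn
    obtain ⟨a, c, d, ha, hc, hd, hac, hcd, hsum, heq'⟩ := sort_sol b x y z hx hy hz heq
    rcases le_or_gt d (a + c) with hle | hgt
    · exact ⟨a, c, d, ha, hc, hd, hac, hcd, hle, heq'⟩
    · set d' := b * a * c - 2 * (a + c) - d with hd'
      have hprod : d' * d = (a + c) ^ 2 := by
        have : (a + c + d) ^ 2 = b * a * c * d := heq'
        linear_combination -this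
      have hd'pos : 0 < d' := by
        by_contra hcon
        push_neg at hcon
        nlinarith
      have heq2 : (a + c + d') ^ 2 = b * a * c * d' := by
        linear_combination -hprod - d' * hd'
      have hd'lt : d' < d := by nlinarith
      obtain ⟨p, q, r, hp, hq, hr, hpq, hqr, hr2, heq3⟩ :=
        ih a c d' ha hc hd'pos heq2 (by omega)
      exact ⟨p, q, r, hp, hq, hr, hpq, hqr, hr2, heq3⟩

/-- Fix a positive integer b.  If the set S_b (of triples of
positive integers (x,y,z) with (x+y+z)² = b·x·y·z) is nonempty, then S_b
contains a Vieta-reduced solution: x ≤ y ≤ z ≤ x + y. -/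
theorem stmt_3 (b : ℤ) (hb : 0 < b)
    (h : ∃ x y z : ℤ, 0 < x ∧ 0 < y ∧ 0 < z ∧ (x + y + z) ^ 2 = b * x * y * z) :
    ∃ x y z : ℤ, 0 < x ∧ 0 < y ∧ 0 < z ∧ x ≤ y ∧ y ≤ z ∧ z ≤ x + y ∧
      (x + y + z) ^ 2 = b * x * y * z := by
  obtain ⟨x, y, z, hx, hy, hz, heq⟩ := h
  exact descent b (x + y + z).toNat x y z hx hy hz heq le_rfl
end

section
/- Let b, x, y, z be positive integers with x ≤ y ≤ z ≤ x + y. Then (x+y+z)² = b·x·y·z holds if and only if (b,x,y,z) is one of the following thirteen 4-tuples: (1,5,20,25), (1,6,12,18), (1,8,8,16), (1,9,9,9), (2,3,6,9), (2,4,4,8), (3,2,4,6), (3,3,3,3), (4,2,2,4), (5,1,4,5), (6,1,2,3), (8,1,1,2), (9,1,1,1). -/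
set_option maxHeartbeats 4000000 in
/-- Let b, x, y, z be positive integers with x ≤ y ≤ z ≤ x + y.
Then (x+y+z)² = b·x·y·z holds iff (b,x,y,z) is one of thirteen explicit tuples. -/
theorem stmt_4 (b x y z : ℤ) (hb : 0 < b) (hx : 0 < x) (hy : 0 < y) (hz : 0 < z)
    (hxy : x ≤ y) (hyz : y ≤ z) (hzxy : z ≤ x + y) :
    (x + y + z) ^ 2 = b * x * y * z ↔
      (b, x, y, z) = (1, 5, 20, 25) ∨
      (b, x, y, z) = (1, 6, 12, 18) ∨
      (b, x, y, z) = (1, 8, 8, 16) ∨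
      (b, x, y, z) = (1, 9, 9, 9) ∨
      (b, x, y, z) = (2, 3, 6, 9) ∨
      (b, x, y, z) = (2, 4, 4, 8) ∨
      (b, x, y, z) = (3, 2, 4, 6) ∨
      (b, x, y, z) = (3, 3, 3, 3) ∨
      (b, x, y, z) = (4, 2, 2, 4) ∨
      (b, x, y, z) = (5, 1, 4, 5) ∨
      (b, x, y, z) = (6, 1, 2, 3) ∨
      (b, x, y, z) = (8, 1, 1, 2) ∨
      (b, x, y, z) = (9, 1, 1, 1) := by
  constructor
  · intro h
    have h1 : 4*(x+y) ≤ b*x*y := by nlinarith [sq_nonneg (x+y-z), hz, h]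
    have hs : 0 ≤ (x+y)^2 - y*z := by nlinarith
    have h2 : b*x*y^2 ≤ (x+2*y)^2 := by
      nlinarith [mul_nonneg (sub_nonneg.mpr hyz) hs, h, hz, hy]
    have h3 : 5 ≤ b*x := by nlinarith [h1, hx, hy]
    have h4 : b*x ≤ 9 := by nlinarith [h2, hxy, hy]
    have h5 : y*(b*x-4) ≤ 5*x := by nlinarith [h2, hxy, hy, hx]
    have h6 : x ≤ 9 := by nlinarith [h4, hb, hx]
    have h7 : b ≤ 9 := by nlinarith [h4, hb, hx]
    have h8 : y ≤ 45 := by nlinarith [h5, h3, h6]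
    rw [pow_two] at h
    clear h1 hs h2
    simp only [Prod.mk.injEq]
    interval_cases b <;> interval_cases x <;>
      first
      | (exfalso; omega)
      | (interval_cases y <;>
          first
          | (exfalso; omega)
          | (interval_cases z <;> first | (exfalso; omega) | norm_num))
  · rintro (h|h|h|h|h|h|h|h|h|h|h|h|h) <;>
      (injection h with h1 h; injection h with h2 h; injection h with h3 h4;
       subst h1; subst h2; subst h3; subst h4; norm_num)
end

section
/- Fix a positive integer b and a Vieta-reduced solution (x, y₀, z₀) ∈ S_b. Define sequences recursively by y_{j+1} := z_j and z_{j+1} := b·x·y_{j+1} − 2(x + y_{j+1}) − y_j for all j ≥ 0. Then for every j ≥ 1 the triple (x, y_j, z_j) consists of positive integers with (x + y_j + z_j)² = b·x·y_j·z_j and z_{j−1} < z_j; moreover x divides y_j and x divides z_j for all j ≥ 0. -/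
lemma reduced_dvd (b x y z : ℤ) (hb : 0 < b) (hx : 0 < x) (hy : 0 < y) (hz : 0 < z)
    (h1 : x ≤ y) (h2 : y ≤ z) (h3 : z ≤ x + y)
    (hsol : (x + y + z) ^ 2 = b * x * y * z) : x ∣ y ∧ x ∣ z := by
  obtain ⟨t, ht⟩ : ∃ t, t = x + y - z := ⟨_, rfl⟩
  obtain ⟨k, hk⟩ : ∃ k, k = b * x * y - 4 * (x + y) := ⟨_, rfl⟩
  have hkz : k * z = t * t := by rw [hk, ht]; linear_combination -hsol
  have ht0 : 0 ≤ t := by omega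
  have htx : t ≤ x := by omega
  have hk0 : 0 ≤ k := by nlinarith [mul_nonneg ht0 ht0]
  have hkt : k ≤ t := by nlinarith
  have hky : b * x * y = 4 * (x + y) + k := by rw [hk]; ring
  have h5 : 5 ≤ b * x := by nlinarith
  have h9 : b * x ≤ 9 := by nlinarith
  have hx9 : x ≤ 9 := by nlinarith
  have hb9 : b ≤ 9 := by nlinarith
  clear hsol hk
  interval_cases x <;> interval_cases b <;>
    first
      | omega
      | (interval_cases t <;> interval_cases k <;> omega)



/-- Fix a positive integer b and a Vieta-reduced solution
(x, y₀, z₀) ∈ S_b.  Define y_{j+1} := z_j and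
z_{j+1} := b·x·y_{j+1} − 2(x + y_{j+1}) − y_j.  Then for every j ≥ 1 the triple
(x, y_j, z_j) consists of positive integers with (x + y_j + z_j)² = b·x·y_j·z_j
and z_{j−1} < z_j; moreover x ∣ y_j and x ∣ z_j for all j ≥ 0. -/
theorem stmt_5 (b x : ℤ) (y z : ℕ → ℤ) (hb : 0 < b) (hx : 0 < x)
    (hy0 : 0 < y 0) (hz0 : 0 < z 0)
    (hred : x ≤ y 0 ∧ y 0 ≤ z 0 ∧ z 0 ≤ x + y 0)
    (hsol : (x + y 0 + z 0) ^ 2 = b * x * y 0 * z 0)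
    (hyrec : ∀ j : ℕ, y (j + 1) = z j)
    (hzrec : ∀ j : ℕ, z (j + 1) = b * x * y (j + 1) - 2 * (x + y (j + 1)) - y j) :
    (∀ j : ℕ, 0 < y (j + 1) ∧ 0 < z (j + 1) ∧
      (x + y (j + 1) + z (j + 1)) ^ 2 = b * x * y (j + 1) * z (j + 1) ∧
      z j < z (j + 1)) ∧
    (∀ j : ℕ, x ∣ y j ∧ x ∣ z j) := by
  obtain ⟨hxy, hyz, hzxy⟩ := hred
  have step : ∀ j : ℕ, 0 < y j → 0 < z j → y j ≤ z j →
      (x + y j + z j) ^ 2 = b * x * y j * z j →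
      0 < y (j + 1) ∧ 0 < z (j + 1) ∧ y (j + 1) ≤ z (j + 1) ∧
        (x + y (j + 1) + z (j + 1)) ^ 2 = b * x * y (j + 1) * z (j + 1) ∧
        z j < z (j + 1) := by
    intro j hyj hzj hyzj heq
    have hy1 : y (j + 1) = z j := hyrec j
    have hz1 : z (j + 1) = b * x * z j - 2 * (x + z j) - y j := by
      rw [hzrec j, hyrec j]
    have hprod : z (j + 1) * y j = (x + z j) ^ 2 := by
      rw [hz1]; linear_combination -heq
    have hsq : 0 < (x + z j) ^ 2 := by positivity
    have hz1pos : 0 < z (j + 1) := by nlinarith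
    have hlt : z j < z (j + 1) := by nlinarith
    refine ⟨by rw [hy1]; exact hzj, hz1pos, by rw [hy1]; exact le_of_lt hlt, ?_, hlt⟩
    rw [hy1, hz1]
    linear_combination heq
  have P : ∀ j : ℕ, 0 < y j ∧ 0 < z j ∧ y j ≤ z j ∧
      (x + y j + z j) ^ 2 = b * x * y j * z j := by
    intro j
    induction j with
    | zero => exact ⟨hy0, hz0, hyz, hsol⟩
    | succ n ih =>
      obtain ⟨a1, a2, a3, a4, _⟩ := step n ih.1 ih.2.1 ih.2.2.1 ih.2.2.2
      exact ⟨a1, a2, a3, a4⟩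
  constructor
  · intro j
    obtain ⟨p1, p2, p3, p4⟩ := P j
    obtain ⟨a1, a2, _, a4, a5⟩ := step j p1 p2 p3 p4
    exact ⟨a1, a2, a4, a5⟩
  · intro j
    induction j with
    | zero => exact reduced_dvd b x (y 0) (z 0) hb hx hy0 hz0 hxy hyz hzxy hsol
    | succ n ih =>
      obtain ⟨⟨u, hu⟩, ⟨v, hv⟩⟩ := ih
      have h1 : x ∣ y (n + 1) := by rw [hyrec]; exact ⟨v, hv⟩
      refine ⟨h1, ?_⟩
      rw [hzrec, hyrec, hv]
      exact ⟨b * x * v - 2 - 2 * v - u, by rw [hu]; ring⟩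
end

section
/- For all positive integers i and b with 2 ≤ b ≤ 3i + 5, there exists a rational convex polygon P ⊂ ℝ² of denominator 3 that is pseudointegral, has exactly i lattice points in its interior, and has exactly b lattice points on its boundary. In fact, one may take P = conv{(i,0), (0,1/3), (−2,−1), (b−4,−1), (i + (2/3)(b−5), −2/3)}. -/
open Set Pointwise

/-- The set of lattice points of the plane. -/
def latticePts : Set (ℝ × ℝ) := {p | ∃ m n : ℤ, p = ((m : ℝ), (n : ℝ))}

/-- The coercion of a rational point of the plane to a real point. -/
def qpt (v : ℚ × ℚ) : ℝ × ℝ := ((v.1 : ℝ), (v.2 : ℝ))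

/-- The Ehrhart function of a set `P ⊆ ℝ²`:  `t ↦ #(tP ∩ ℤ²)`. -/
noncomputable def ehr (P : Set (ℝ × ℝ)) (t : ℕ) : ℕ :=
  (((t : ℝ) • P) ∩ latticePts).ncard

/-- A set `P ⊆ ℝ²` is pseudointegral (a PIP) if its Ehrhart function agrees with
a polynomial at all positive integers. -/
def IsPIP (P : Set (ℝ × ℝ)) : Prop :=
  ∃ c : Polynomial ℚ, ∀ t : ℕ, 0 < t → (ehr P t : ℚ) = c.eval (t : ℚ)

/-- A rational triangle: the convex hull of three non-collinear rational points. -/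
def IsRatTriangle (T : Set (ℝ × ℝ)) : Prop :=
  ∃ p q r : ℚ × ℚ, ¬ Collinear ℝ ({qpt p, qpt q, qpt r} : Set (ℝ × ℝ)) ∧
    T = convexHull ℝ {qpt p, qpt q, qpt r}

/-- A rational convex polygon: the convex hull of a finite set of rational
points, with nonempty interior in ℝ². -/
def IsRatPolygon (P : Set (ℝ × ℝ)) : Prop :=
  ∃ V : Finset (ℚ × ℚ), P = convexHull ℝ (qpt '' (V : Set (ℚ × ℚ))) ∧
    (interior P).Nonempty

/-- `P` has denominator `d`: `d` is the least positive integer `k` such that the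
vertices (extreme points) of `kP` are all lattice points. -/
def HasDenom (P : Set (ℝ × ℝ)) (d : ℕ) : Prop :=
  IsLeast {k : ℕ | 0 < k ∧ Set.extremePoints ℝ ((k : ℝ) • P) ⊆ latticePts} d

/-!
The pentagon `P` is an intersection of five half-planes, so the lattice points of `tP` can be
counted row by row: on the row at height `y`, `-t ≤ y ≤ t/3`, they run from `⌈(3y - t)/2⌉` to the
minimum of three linear forms, each of which is active on one of the ranges `0 ≤ 3y ≤ t`,
`-2t ≤ 3y ≤ 0` and `3y ≤ -2t`. Summing these rows, with `t` split by its residue mod 3, gives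
`2 #(tP ∩ ℤ²) = (2i + b - 2) t² + b t + 2` for every `t ≥ 1`, so `P` is pseudointegral. Its interior
lattice points are the `i` points `(m, 0)`, `0 ≤ m < i`, and at `t = 1` the count gives `i + b`
lattice points in `P`, hence `b` on the boundary. Finally `3P` is integral, while the vertex
`(0, 1/3)` is exposed by the height function, so it stays a vertex of `kP` and `kP` is integral only
if `3 ∣ k`.
-/

section IntervalSums

theorem sum_Ico_consecutive_of_le {α M : Type*} [LinearOrder α] [LocallyFiniteOrder α]
    [AddCommMonoid M] (f : α → M) {a b c : α} (hab : a ≤ b) (hbc : b ≤ c) :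
    ∑ y ∈ Finset.Ico a b, f y + ∑ y ∈ Finset.Ico b c, f y = ∑ y ∈ Finset.Ico a c, f y := by
  rw [← Finset.sum_union (Finset.Ico_disjoint_Ico_consecutive a b c),
    Finset.Ico_union_Ico_eq_Ico hab hbc]

theorem two_mul_sum_Ico_linear (α β a c : ℤ) (hac : a ≤ c) :
    2 * ∑ y ∈ Finset.Ico a c, (α + β * y) = (c - a) * (2 * α + β * (a + c - 1)) := by
  induction c, hac using Int.leInduction with
  | base => simp
  | succ c hac ih =>
    rw [← sum_Ico_consecutive_of_le _ hac (Int.le_add_one le_rfl), mul_add, ih,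
      Finset.Ico_add_one_right_eq_Icc, Finset.Icc_self, Finset.sum_singleton]
    ring

theorem sum_Ico_add_emod_two (t a c : ℤ) (hac : a ≤ c) :
    ∑ y ∈ Finset.Ico a c, (t + y) % 2 = (c + t) / 2 - (a + t) / 2 := by
  induction c, hac using Int.leInduction with
  | base => simp
  | succ c hac ih =>
    rw [← sum_Ico_consecutive_of_le _ hac (Int.le_add_one le_rfl), ih,
      Finset.Ico_add_one_right_eq_Icc, Finset.Icc_self, Finset.sum_singleton]
    omega

end IntervalSums

section HalfPlanes

def halfPlane (a c d : ℝ) : Set (ℝ × ℝ) := {p | a * p.1 + c * p.2 ≤ d}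

def openHalfPlane (a c d : ℝ) : Set (ℝ × ℝ) := {p | a * p.1 + c * p.2 < d}

variable {a c d : ℝ}

theorem convex_halfPlane : Convex ℝ (halfPlane a c d) :=
  convex_halfSpace_le ⟨fun p q ↦ by simp only [Prod.fst_add, Prod.snd_add]; ring,
    fun r p ↦ by simp only [Prod.smul_fst, Prod.smul_snd, smul_eq_mul]; ring⟩ d

theorem isClosed_halfPlane : IsClosed (halfPlane a c d) :=
  isClosed_le (by fun_prop) continuous_const

theorem interior_halfPlane (h : a ≠ 0 ∨ c ≠ 0) :
    interior (halfPlane a c d) = openHalfPlane a c d := by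
  let f : ℝ × ℝ →L[ℝ] ℝ :=
    a • ContinuousLinearMap.fst ℝ ℝ ℝ + c • ContinuousLinearMap.snd ℝ ℝ ℝ
  have hf : ∀ p, f p = a * p.1 + c * p.2 := fun p ↦ rfl
  have hsurj : Function.Surjective f := by
    intro r
    rcases h with h | h
    · exact ⟨(r / a, 0), by rw [hf]; field_simp; ring⟩
    · exact ⟨(0, r / c), by rw [hf]; field_simp; ring⟩
  have hpre : halfPlane a c d = f ⁻¹' Iic d := by ext p; simp [halfPlane, hf]
  have hpre' : openHalfPlane a c d = f ⁻¹' Iio d := by ext p; simp [openHalfPlane, hf]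
  rw [hpre, hpre', f.interior_preimage hsurj, interior_Iic]

theorem smul_halfPlane {t : ℝ} (ht : 0 < t) : t • halfPlane a c d = halfPlane a c (t * d) := by
  ext p
  rw [mem_smul_set_iff_inv_smul_mem₀ ht.ne']
  simp only [halfPlane, mem_ofPred_eq, Prod.smul_fst, Prod.smul_snd, smul_eq_mul]
  rw [← inv_mul_le_iff₀ ht]
  ring_nf

end HalfPlanes

theorem Convex.mem_of_horizontal {S : Set (ℝ × ℝ)} (hS : Convex ℝ S) {x₁ x₂ x y : ℝ}
    (h₁ : (x₁, y) ∈ S) (h₂ : (x₂, y) ∈ S) (hx₁ : x₁ ≤ x) (hx₂ : x ≤ x₂) : (x, y) ∈ S :=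
  hS.segment_subset h₁ h₂ <| by
    rw [← Prod.image_mk_segment_left, segment_eq_Icc (hx₁.trans hx₂)]
    exact ⟨x, ⟨hx₁, hx₂⟩, rfl⟩

theorem extremePoints_smul {E : Type*} [AddCommGroup E] [Module ℝ E] {r : ℝ} (hr : r ≠ 0)
    (s : Set E) : extremePoints ℝ (r • s) = r • extremePoints ℝ s :=
  (image_extremePoints (LinearEquiv.smulOfNeZero ℝ E r hr) s).symm

section LatticePoints

theorem latticePts_eq_range : latticePts = range (Prod.map ((↑) : ℤ → ℝ) ((↑) : ℤ → ℝ)) := by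
  ext p
  simp [latticePts, Prod.ext_iff, eq_comm]

theorem ncard_inter_latticePts (S : Set (ℝ × ℝ)) :
    (S ∩ latticePts).ncard = (Prod.map ((↑) : ℤ → ℝ) ((↑) : ℤ → ℝ) ⁻¹' S).ncard := by
  rw [latticePts_eq_range, ← image_preimage_eq_inter_range,
    ncard_image_of_injective _ (Int.cast_injective.prodMap Int.cast_injective)]

theorem ncard_rows (Y : Finset ℤ) (L R : ℤ → ℤ) (h : ∀ y ∈ Y, L y ≤ R y + 1) :
    ({v : ℤ × ℤ | v.2 ∈ Y ∧ L v.2 ≤ v.1 ∧ v.1 ≤ R v.2}.ncard : ℤ) =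
      ∑ y ∈ Y, (R y + 1 - L y) := by
  have hrows : {v : ℤ × ℤ | v.2 ∈ Y ∧ L v.2 ≤ v.1 ∧ v.1 ≤ R v.2} =
      ↑(Y.biUnion fun y ↦ Finset.Icc (L y) (R y) ×ˢ {y}) := by
    ext ⟨x, y⟩
    simp only [mem_ofPred_eq, Finset.coe_biUnion, Finset.coe_product, Finset.coe_Icc,
      Finset.coe_singleton, mem_iUnion, mem_prod, mem_Icc, mem_singleton_iff, Finset.mem_coe]
    constructor
    · rintro ⟨hy, hx⟩
      exact ⟨y, hy, hx, rfl⟩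
    · rintro ⟨y, hy, hx, rfl⟩
      exact ⟨hy, hx⟩
  rw [hrows, ncard_coe_finset, Finset.card_biUnion, Nat.cast_sum]
  · refine Finset.sum_congr rfl fun y hy ↦ ?_
    rw [Finset.card_product, Finset.card_singleton, mul_one, Int.card_Icc_of_le _ _ (h y hy)]
  · intro y₁ _ y₂ _ hne
    simp only [Function.onFun, Finset.disjoint_left, Finset.mem_product, Finset.mem_singleton]
    rintro v ⟨-, rfl⟩ ⟨-, h₂⟩
    exact hne h₂

end LatticePoints

theorem IsClosed.ncard_frontier_inter {E : Type*} [TopologicalSpace E] {S A : Set E}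
    (hS : IsClosed S) (hfin : (interior S ∩ A).Finite) :
    (frontier S ∩ A).ncard = (S ∩ A).ncard - (interior S ∩ A).ncard := by
  rw [hS.frontier_eq, Set.inter_sdiff_distrib_right,
    ncard_sdiff (inter_subset_inter_left A interior_subset) hfin]

theorem isPIP_of_ehr_eq {P : Set (ℝ × ℝ)} (a₂ a₁ a₀ : ℚ)
    (h : ∀ t : ℕ, 0 < t → (ehr P t : ℚ) = a₂ * t ^ 2 + a₁ * t + a₀) : IsPIP P :=
  ⟨.C a₂ * .X ^ 2 + .C a₁ * .X + .C a₀, fun t ht ↦ by simp [h t ht]⟩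

namespace PIPPentagon

section Pentagon

def vertices (i b : ℝ) : Set (ℝ × ℝ) :=
  {(i, 0), (0, 1/3), (-2, -1), (b - 4, -1), (i + (2/3) * (b - 5), -(2/3))}

def pentagon (i b : ℝ) : Set (ℝ × ℝ) :=
  halfPlane 0 (-1) 1 ∩ halfPlane (-2) 3 1 ∩ halfPlane 1 (3 * i) i ∩ halfPlane 1 (b - 5) i ∩
    halfPlane 1 (b - 3 * i - 2) (3 * i - 2)

def openPentagon (i b : ℝ) : Set (ℝ × ℝ) :=
  openHalfPlane 0 (-1) 1 ∩ openHalfPlane (-2) 3 1 ∩ openHalfPlane 1 (3 * i) i ∩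
    openHalfPlane 1 (b - 5) i ∩ openHalfPlane 1 (b - 3 * i - 2) (3 * i - 2)

variable {i b : ℝ}

theorem mem_pentagon {p : ℝ × ℝ} : p ∈ pentagon i b ↔ -1 ≤ p.2 ∧ -2 * p.1 + 3 * p.2 ≤ 1 ∧
    p.1 + 3 * i * p.2 ≤ i ∧ p.1 + (b - 5) * p.2 ≤ i ∧ p.1 + (b - 3 * i - 2) * p.2 ≤ 3 * i - 2 := by
  simp only [pentagon, halfPlane, mem_inter_iff, mem_ofPred_eq]
  constructor
  · rintro ⟨⟨⟨⟨h₁, h₂⟩, h₃⟩, h₄⟩, h₅⟩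
    exact ⟨by linarith, h₂, by linarith, by linarith, by linarith⟩
  · rintro ⟨h₁, h₂, h₃, h₄, h₅⟩
    exact ⟨⟨⟨⟨by linarith, h₂⟩, by linarith⟩, by linarith⟩, by linarith⟩

theorem convex_pentagon : Convex ℝ (pentagon i b) :=
  (((convex_halfPlane.inter convex_halfPlane).inter convex_halfPlane).inter
    convex_halfPlane).inter convex_halfPlane

theorem isClosed_pentagon : IsClosed (pentagon i b) :=
  (((isClosed_halfPlane.inter isClosed_halfPlane).inter isClosed_halfPlane).inter
    isClosed_halfPlane).inter isClosed_halfPlane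

theorem interior_pentagon : interior (pentagon i b) = openPentagon i b := by
  simp only [pentagon, openPentagon, interior_inter]
  rw [interior_halfPlane (by norm_num), interior_halfPlane (by norm_num),
    interior_halfPlane (by norm_num), interior_halfPlane (by norm_num),
    interior_halfPlane (by norm_num)]

theorem smul_pentagon {t : ℝ} (ht : 0 < t) :
    t • pentagon i b = halfPlane 0 (-1) (t * 1) ∩ halfPlane (-2) 3 (t * 1) ∩
      halfPlane 1 (3 * i) (t * i) ∩ halfPlane 1 (b - 5) (t * i) ∩
        halfPlane 1 (b - 3 * i - 2) (t * (3 * i - 2)) := by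
  simp only [pentagon, smul_set_inter₀ ht.ne', smul_halfPlane ht]

theorem three_mul_snd_le_of_mem_pentagon (hi : 0 ≤ i) {p : ℝ × ℝ} (hp : p ∈ pentagon i b) :
    3 * p.2 ≤ 1 := by
  obtain ⟨-, h₂, h₃, -, -⟩ := mem_pentagon.1 hp
  nlinarith

theorem vertices_subset_pentagon (hi : 1 ≤ i) (hb₂ : 2 ≤ b) (hb : b ≤ 3 * i + 5) :
    vertices i b ⊆ pentagon i b := by
  intro p hp
  simp only [vertices, mem_insert_iff, mem_singleton_iff] at hp
  rw [mem_pentagon]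
  rcases hp with rfl | rfl | rfl | rfl | rfl <;> refine ⟨?_, ?_, ?_, ?_, ?_⟩ <;> linarith

theorem pentagon_subset_convexHull (hi : 0 ≤ i) :
    pentagon i b ⊆ convexHull ℝ (vertices i b) := by
  rintro ⟨x, y⟩ hp
  have hy := three_mul_snd_le_of_mem_pentagon hi hp
  obtain ⟨h₁, h₂, h₃, h₄, h₅⟩ := mem_pentagon.1 hp
  dsimp only at hy h₁ h₂ h₃ h₄ h₅
  set H := convexHull ℝ (vertices i b)
  have hconv : Convex ℝ H := convex_convexHull ℝ _
  have hV : ∀ v ∈ vertices i b, v ∈ H := subset_convexHull ℝ _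
  have hA := hV (i, 0) (by simp [vertices])
  have hB := hV (0, 1/3) (by simp [vertices])
  have hC := hV (-2, -1) (by simp [vertices])
  have hD := hV (b - 4, -1) (by simp [vertices])
  have hE := hV (i + (2/3) * (b - 5), -(2/3)) (by simp [vertices])
  have hedge {u v : ℝ × ℝ} (hu : u ∈ H) (hv : v ∈ H) {θ x' : ℝ} (hθ₀ : 0 ≤ θ) (hθ₁ : θ ≤ 1)
      (hx' : u.1 + θ * (v.1 - u.1) = x') (hy' : u.2 + θ * (v.2 - u.2) = y) : (x', y) ∈ H := by
    convert hconv.add_smul_sub_mem hu hv ⟨hθ₀, hθ₁⟩ using 1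
    ext <;> simp [← hx', ← hy']
  have hL : ((3 * y - 1) / 2, y) ∈ H :=
    hedge hB hC (θ := (1 - 3 * y) / 4) (by linarith) (by linarith) (by ring) (by ring)
  rcases le_total 0 y with hy₀ | hy₀
  · refine hconv.mem_of_horizontal hL (hedge hA hB (θ := 3 * y) (by linarith) (by linarith)
      rfl (by ring)) (by linarith) (by linarith)
  rcases le_total (-2) (3 * y) with hy₂ | hy₂
  · refine hconv.mem_of_horizontal hL (hedge hA hE (θ := -3 * y / 2) (by linarith)
      (by linarith) rfl (by ring)) (by linarith) (by linarith)
  · refine hconv.mem_of_horizontal hL (hedge hE hD (θ := -2 - 3 * y) (by linarith)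
      (by linarith) rfl (by ring)) (by linarith) (by linarith)

theorem convexHull_vertices (hi : 1 ≤ i) (hb₂ : 2 ≤ b) (hb : b ≤ 3 * i + 5) :
    convexHull ℝ (vertices i b) = pentagon i b :=
  (convexHull_min (vertices_subset_pentagon hi hb₂ hb) convex_pentagon).antisymm
    (pentagon_subset_convexHull (by linarith))

theorem top_mem_exposedPoints (hi : 1 ≤ i) (hb : b ≤ 3 * i + 5) :
    ((0 : ℝ), (1 / 3 : ℝ)) ∈ (pentagon i b).exposedPoints ℝ := by
  refine ⟨mem_pentagon.2 ⟨by norm_num, by norm_num, by linarith, by linarith, by linarith⟩,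
    ContinuousLinearMap.snd ℝ ℝ ℝ, fun p hp ↦ ?_⟩
  have hy := three_mul_snd_le_of_mem_pentagon (by linarith) hp
  obtain ⟨-, h₂, h₃, -, -⟩ := mem_pentagon.1 hp
  simp only [ContinuousLinearMap.coe_snd']
  refine ⟨by linarith, fun hy' ↦ Prod.ext ?_ (by linarith)⟩
  nlinarith

end Pentagon

def rightEnd (i b t y : ℤ) : ℤ :=
  min (min (i * t - 3 * i * y) (i * t - (b - 5) * y)) ((3 * i - 2) * t - (b - 3 * i - 2) * y)

section RowSums

variable {i b t y : ℤ}

theorem rightEnd_of_nonneg (hi : 1 ≤ i) (hb : b ≤ 3 * i + 5) (hy : 0 ≤ y) (hyt : 3 * y ≤ t) :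
    rightEnd i b t y = i * t - 3 * i * y := by
  have : 0 ≤ (3 * i + 5 - b) * y := mul_nonneg (by omega) hy
  have : 0 ≤ (i - 1) * t := mul_nonneg (by omega) (by omega)
  have : 0 ≤ (6 * i + 2 - b) * y := mul_nonneg (by omega) hy
  rw [rightEnd, min_eq_left (min_le_of_left_le (by nlinarith)), min_eq_left (by nlinarith)]

theorem rightEnd_of_nonpos (hi : 1 ≤ i) (hb : b ≤ 3 * i + 5) (hy : y ≤ 0)
    (hyt : -2 * t ≤ 3 * y) :
    rightEnd i b t y = i * t - (b - 5) * y := by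
  have : 0 ≤ (3 * i + 5 - b) * -y := mul_nonneg (by omega) (by omega)
  have : 0 ≤ (i - 1) * (2 * t + 3 * y) := mul_nonneg (by omega) (by omega)
  rw [rightEnd, min_eq_right (show i * t - (b - 5) * y ≤ i * t - 3 * i * y by nlinarith),
    min_eq_left (by nlinarith)]

theorem rightEnd_of_le (hi : 1 ≤ i) (hb : b ≤ 3 * i + 5) (ht : 0 ≤ t) (hyt : 3 * y ≤ -2 * t) :
    rightEnd i b t y = (3 * i - 2) * t - (b - 3 * i - 2) * y := by
  have : 0 ≤ (i - 1) * (-2 * t - 3 * y) := mul_nonneg (by omega) (by omega)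
  have : 0 ≤ (6 * i + 2 - b) * (-2 * t - 3 * y) := mul_nonneg (by omega) (by omega)
  have : 0 ≤ (3 * i + 5 - b) * t := mul_nonneg (by omega) ht
  rw [rightEnd, min_eq_right (le_min (by nlinarith) (by nlinarith))]

theorem neg_ediv_two_le_rightEnd_add_one (hi : 1 ≤ i) (hb₂ : 2 ≤ b) (hb : b ≤ 3 * i + 5)
    (hy : -t ≤ y) (hyt : 3 * y ≤ t) : -((t - 3 * y) / 2) ≤ rightEnd i b t y + 1 := by
  have : 0 ≤ (2 * i + 1) * (t - 3 * y) := mul_nonneg (by omega) (by omega)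
  have : 0 ≤ (3 * i + 5 - b) * (y + t) := mul_nonneg (by omega) (by omega)
  have : 0 ≤ (i + b - 3) * (t - 3 * y) := mul_nonneg (by omega) (by omega)
  have : 0 ≤ (12 * i - 4 - b) * (y + t) := mul_nonneg (by omega) (by omega)
  have : 0 ≤ (b - 2) * (t - 3 * y) := mul_nonneg (by omega) (by omega)
  have h₁ : 3 * y - t ≤ 2 * (i * t - 3 * i * y) := by linarith
  have h₂ : 3 * y - t ≤ 2 * (i * t - (b - 5) * y) := by linarith
  have h₃ : 3 * y - t ≤ 2 * ((3 * i - 2) * t - (b - 3 * i - 2) * y) := by linarith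
  rw [rightEnd]
  omega

theorem sum_rightEnd (hi : 1 ≤ i) (hb : b ≤ 3 * i + 5) (ht : 0 ≤ t) :
    ∑ y ∈ Finset.Ico (-t) (t / 3 + 1), rightEnd i b t y =
      ∑ y ∈ Finset.Ico (-t) (-(2 * t / 3)), ((3 * i - 2) * t + (-(b - 3 * i - 2)) * y) +
      ∑ y ∈ Finset.Ico (-(2 * t / 3)) 0, (i * t + (-(b - 5)) * y) +
      ∑ y ∈ Finset.Ico 0 (t / 3 + 1), (i * t + (-(3 * i)) * y) := by
  rw [← sum_Ico_consecutive_of_le (rightEnd i b t) (by omega : -t ≤ 0) (by omega),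
    ← sum_Ico_consecutive_of_le (rightEnd i b t) (by omega : -t ≤ -(2 * t / 3)) (by omega)]
  congr 1; congr 1
  · refine Finset.sum_congr rfl fun y hy ↦ ?_
    rw [Finset.mem_Ico] at hy
    rw [rightEnd_of_le hi hb ht (by omega)]; ring
  · refine Finset.sum_congr rfl fun y hy ↦ ?_
    rw [Finset.mem_Ico] at hy
    rw [rightEnd_of_nonpos hi hb (by omega) (by omega)]; ring
  · refine Finset.sum_congr rfl fun y hy ↦ ?_
    rw [Finset.mem_Ico] at hy
    rw [rightEnd_of_nonneg hi hb (by omega) (by omega)]; ring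

theorem two_mul_sum_sub_three_mul_ediv_two (t a c : ℤ) :
    2 * ∑ y ∈ Finset.Ico a c, (t - 3 * y) / 2 =
      ∑ y ∈ Finset.Ico a c, (t + (-3) * y) - ∑ y ∈ Finset.Ico a c, (t + y) % 2 := by
  rw [Finset.mul_sum, ← Finset.sum_sub_distrib]
  exact Finset.sum_congr rfl fun y _ ↦ by omega

theorem two_mul_sum_rowLength (hi : 1 ≤ i) (hb : b ≤ 3 * i + 5) (ht : 0 ≤ t) :
    2 * ∑ y ∈ Finset.Ico (-t) (t / 3 + 1), (rightEnd i b t y + 1 + (t - 3 * y) / 2) =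
      (2 * i + b - 2) * t ^ 2 + b * t + 2 := by
  have hcard : ∑ y ∈ Finset.Ico (-t) (t / 3 + 1), (1 : ℤ) = t / 3 + 1 + t := by
    rw [Finset.sum_const, Int.card_Ico, nsmul_one, Int.toNat_of_nonneg (by omega)]; ring
  have hfloor := two_mul_sum_sub_three_mul_ediv_two t (-t) (t / 3 + 1)
  rw [Finset.sum_add_distrib, Finset.sum_add_distrib, sum_rightEnd hi hb ht, hcard]
  have e₁ := two_mul_sum_Ico_linear ((3 * i - 2) * t) (-(b - 3 * i - 2)) (-t) (-(2 * t / 3))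
    (by omega)
  have e₂ := two_mul_sum_Ico_linear (i * t) (-(b - 5)) (-(2 * t / 3)) 0 (by omega)
  have e₃ := two_mul_sum_Ico_linear (i * t) (-(3 * i)) 0 (t / 3 + 1) (by omega)
  have e₄ := two_mul_sum_Ico_linear t (-3) (-t) (t / 3 + 1) (by omega)
  have e₅ := sum_Ico_add_emod_two t (-t) (t / 3 + 1) (by omega)
  generalize hq : t / 3 = q at *
  generalize hw : 2 * t / 3 = w at *
  refine mul_left_cancel₀ (two_ne_zero' ℤ) ?_
  rcases (by omega : t = 3 * q ∧ w = 2 * q ∧ (q + 1 + t) / 2 - (-t + t) / 2 = 2 * q ∨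
      t = 3 * q + 1 ∧ w = 2 * q ∧ (q + 1 + t) / 2 - (-t + t) / 2 = 2 * q + 1 ∨
      t = 3 * q + 2 ∧ w = 2 * q + 1 ∧ (q + 1 + t) / 2 - (-t + t) / 2 = 2 * q + 1)
    with ⟨rfl, rfl, hpar⟩ | ⟨rfl, rfl, hpar⟩ | ⟨rfl, rfl, hpar⟩ <;>
  linear_combination 2 * e₁ + 2 * e₂ + 2 * e₃ + 2 * hfloor + e₄ - 2 * e₅ - 2 * hpar

end RowSums

-- `-((t - 3 * n) / 2)` is `⌈(3n - t)/2⌉`, the left end of the row of `tP` at height `n`.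
theorem intCast_mem_smul_pentagon_iff {i b t : ℤ} (hi : 0 ≤ i) (ht : 0 < t) (m n : ℤ) :
    ((m : ℝ), (n : ℝ)) ∈ (t : ℝ) • pentagon i b ↔
      n ∈ Finset.Ico (-t) (t / 3 + 1) ∧ -((t - 3 * n) / 2) ≤ m ∧ m ≤ rightEnd i b t n := by
  rw [smul_pentagon (by exact_mod_cast ht)]
  simp only [halfPlane, mem_inter_iff, mem_ofPred_eq, zero_mul, zero_add, one_mul, mul_one,
    neg_mul]
  norm_cast
  simp only [rightEnd, le_min_iff, Finset.mem_Ico]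
  constructor
  · rintro ⟨⟨⟨⟨h₁, h₂⟩, h₃⟩, h₄⟩, h₅⟩
    have : 3 * n ≤ t := by nlinarith
    exact ⟨⟨by linarith, by omega⟩, by omega, ⟨by linarith, by linarith⟩, by linarith⟩
  · rintro ⟨⟨h₁, -⟩, h₂, ⟨h₃, h₄⟩, h₅⟩
    exact ⟨⟨⟨⟨by linarith, by omega⟩, by linarith⟩, by linarith⟩, by linarith⟩

theorem two_mul_ehr_pentagon {i b : ℤ} (hi : 1 ≤ i) (hb₂ : 2 ≤ b) (hb : b ≤ 3 * i + 5) {t : ℕ}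
    (ht : 0 < t) : 2 * (ehr (pentagon i b) t : ℤ) = (2 * i + b - 2) * t ^ 2 + b * t + 2 := by
  have hmem : Prod.map ((↑) : ℤ → ℝ) ((↑) : ℤ → ℝ) ⁻¹' ((t : ℝ) • pentagon i b) =
      {v : ℤ × ℤ | v.2 ∈ Finset.Ico (-(t : ℤ)) (t / 3 + 1) ∧
        -((t - 3 * v.2) / 2) ≤ v.1 ∧ v.1 ≤ rightEnd i b t v.2} := by
    ext ⟨m, n⟩
    have := intCast_mem_smul_pentagon_iff (i := i) (b := b) (t := t) (by omega)
      (by exact_mod_cast ht) m n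
    rwa [Int.cast_natCast] at this
  have hrows := ncard_rows (Finset.Ico (-(t : ℤ)) (t / 3 + 1)) (fun y ↦ -((t - 3 * y) / 2))
    (rightEnd i b t) fun y hy ↦ by
      rw [Finset.mem_Ico] at hy
      exact neg_ediv_two_le_rightEnd_add_one hi hb₂ hb (by omega) (by omega)
  simp only [sub_neg_eq_add] at hrows
  rw [ehr, ncard_inter_latticePts, hmem, hrows]
  exact two_mul_sum_rowLength hi hb (by positivity)

theorem ncard_interior_pentagon_inter_latticePts {i : ℤ} (b : ℝ) (hi : 0 < i) :
    (interior (pentagon i b) ∩ latticePts).ncard = i.toNat := by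
  have hi' : (1 : ℝ) ≤ i := by exact_mod_cast hi
  have hpts : Prod.map ((↑) : ℤ → ℝ) ((↑) : ℤ → ℝ) ⁻¹' interior (pentagon i b) =
      ↑(Finset.Ico 0 i ×ˢ {(0 : ℤ)}) := by
    ext ⟨m, n⟩
    simp only [interior_pentagon, openPentagon, openHalfPlane, mem_preimage, Prod.map_fst,
      Prod.map_snd, mem_inter_iff, mem_ofPred_eq, zero_mul, zero_add, one_mul, neg_mul,
      Finset.coe_product, Finset.coe_Ico, Finset.coe_singleton, mem_prod, mem_Ico,
      mem_singleton_iff]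
    constructor
    · rintro ⟨⟨⟨⟨h₁, h₂⟩, h₃⟩, -⟩, -⟩
      have hn₁ : (n : ℝ) < 1 := by nlinarith
      have hn₂ : (-1 : ℝ) < n := by linarith
      obtain rfl : n = 0 := by
        have : n < 1 := by exact_mod_cast hn₁
        have : -1 < n := by exact_mod_cast hn₂
        omega
      have hm₁ : (-1 : ℝ) < m := by push_cast at h₂; linarith
      have hm₂ : (m : ℝ) < i := by push_cast at h₃; linarith
      have : -1 < m := by exact_mod_cast hm₁
      have : m < i := by exact_mod_cast hm₂
      exact ⟨⟨by omega, this⟩, rfl⟩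
    · rintro ⟨⟨hm₀, hmi⟩, rfl⟩
      have hm₀' : (0 : ℝ) ≤ m := by exact_mod_cast hm₀
      have hmi' : (m : ℝ) + 1 ≤ i := by exact_mod_cast hmi
      push_cast
      refine ⟨⟨⟨⟨?_, ?_⟩, ?_⟩, ?_⟩, ?_⟩ <;> linarith
  rw [ncard_inter_latticePts, hpts, ncard_coe_finset, Finset.card_product, Int.card_Ico,
    Finset.card_singleton, mul_one, sub_zero]

theorem ncard_pentagon_inter_latticePts {i b : ℤ} (hi : 1 ≤ i) (hb₂ : 2 ≤ b)
    (hb : b ≤ 3 * i + 5) : ((pentagon i b ∩ latticePts).ncard : ℤ) = i + b := by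
  have := two_mul_ehr_pentagon hi hb₂ hb one_pos
  rw [ehr, Nat.cast_one, one_smul] at this
  push_cast at this
  linarith

theorem ncard_frontier_pentagon_inter_latticePts {i b : ℤ} (hi : 1 ≤ i) (hb₂ : 2 ≤ b)
    (hb : b ≤ 3 * i + 5) : ((frontier (pentagon i b) ∩ latticePts).ncard : ℤ) = b := by
  have hint := ncard_interior_pentagon_inter_latticePts b (by omega : 0 < i)
  have htotal := ncard_pentagon_inter_latticePts hi hb₂ hb
  rw [isClosed_pentagon.ncard_frontier_inter (finite_of_ncard_pos (by omega))]
  omega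

theorem isPIP_pentagon {i b : ℤ} (hi : 1 ≤ i) (hb₂ : 2 ≤ b) (hb : b ≤ 3 * i + 5) :
    IsPIP (pentagon i b) :=
  isPIP_of_ehr_eq ((2 * i + b - 2) / 2) (b / 2) 1 fun t ht ↦ by
    have : (2 * ehr (pentagon i b) t : ℚ) = (2 * i + b - 2) * t ^ 2 + b * t + 2 := by
      exact_mod_cast two_mul_ehr_pentagon hi hb₂ hb ht
    linarith

theorem isRatPolygon_convexHull_vertices (i b : ℚ)
    (h : (interior (convexHull ℝ (vertices i b))).Nonempty) :
    IsRatPolygon (convexHull ℝ (vertices i b)) := by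
  refine ⟨{(i, 0), (0, 1/3), (-2, -1), (b - 4, -1), (i + (2/3) * (b - 5), -(2/3))}, ?_, h⟩
  simp only [vertices, Finset.coe_insert, Finset.coe_singleton, image_insert_eq, image_singleton,
    qpt]
  push_cast
  rfl

theorem hasDenom_pentagon {i b : ℤ} (hi : 1 ≤ i) (hb₂ : 2 ≤ b) (hb : b ≤ 3 * i + 5) :
    HasDenom (pentagon i b) 3 := by
  have hi' : (1 : ℝ) ≤ i := by exact_mod_cast hi
  have hb₂' : (2 : ℝ) ≤ b := by exact_mod_cast hb₂
  have hb' : (b : ℝ) ≤ 3 * i + 5 := by exact_mod_cast hb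
  refine ⟨⟨by norm_num, ?_⟩, fun k ⟨hk, hsub⟩ ↦ ?_⟩
  · rw [extremePoints_smul (by norm_num)]
    rintro _ ⟨v, hv, rfl⟩
    rw [← convexHull_vertices hi' hb₂' hb'] at hv
    have hv := extremePoints_convexHull_subset hv
    simp only [vertices, mem_insert_iff, mem_singleton_iff] at hv
    rcases hv with rfl | rfl | rfl | rfl | rfl
    · exact ⟨3 * i, 0, by norm_num⟩
    · exact ⟨0, 1, by norm_num⟩
    · exact ⟨-6, -3, by norm_num⟩
    · exact ⟨3 * b - 12, -3, by push_cast; ext <;> norm_num; ring⟩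
    · exact ⟨3 * i + 2 * b - 10, -2, by push_cast; ext <;> norm_num; ring⟩
  · by_contra! hk₃
    obtain ⟨m, n, hmn⟩ := hsub <| by
      rw [extremePoints_smul (by positivity)]
      exact smul_mem_smul_set (exposedPoints_subset_extremePoints (top_mem_exposedPoints hi' hb'))
    have hkn : (k : ℝ) = 3 * n := by
      have := congrArg Prod.snd hmn
      simp only [Prod.smul_mk, smul_eq_mul] at this
      linarith
    have : (k : ℤ) = 3 * n := by exact_mod_cast hkn
    omega

theorem isRatPolygon_pentagon {i b : ℤ} (hi : 1 ≤ i) (hb₂ : 2 ≤ b) (hb : b ≤ 3 * i + 5) :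
    IsRatPolygon (pentagon i b) := by
  have hhull : convexHull ℝ (vertices ((i : ℚ) : ℝ) ((b : ℚ) : ℝ)) = pentagon i b := by
    rw [Rat.cast_intCast, Rat.cast_intCast]
    exact convexHull_vertices (by exact_mod_cast hi) (by exact_mod_cast hb₂) (by exact_mod_cast hb)
  have hint := ncard_interior_pentagon_inter_latticePts b (by omega : 0 < i)
  have hne := nonempty_of_ncard_ne_zero (hint.trans_ne (by omega))
  rw [← hhull] at hne ⊢
  exact isRatPolygon_convexHull_vertices i b (hne.mono inter_subset_left)

end PIPPentagon

/-- for all positive integers i, b with 2 ≤ b ≤ 3i + 5, the polygon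
P = conv{(i,0), (0,1/3), (−2,−1), (b−4,−1), (i + (2/3)(b−5), −2/3)} is a rational
convex polygon of denominator 3 that is pseudointegral, with exactly i interior
and b boundary lattice points. -/
theorem stmt_10 (i b : ℕ) (hi : 0 < i) (hb2 : 2 ≤ b) (hb : b ≤ 3 * i + 5)
    (P : Set (ℝ × ℝ))
    (hP : P = convexHull ℝ
      ({((i : ℝ), 0), (0, 1/3), (-2, -1), ((b : ℝ) - 4, -1),
        ((i : ℝ) + (2/3) * ((b : ℝ) - 5), -(2/3))} : Set (ℝ × ℝ))) :
    IsRatPolygon P ∧ HasDenom P 3 ∧ IsPIP P ∧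
      (interior P ∩ latticePts).ncard = i ∧
      (frontier P ∩ latticePts).ncard = b := by
  have hiz : (1 : ℤ) ≤ i := by exact_mod_cast hi
  have hb₂z : (2 : ℤ) ≤ b := by exact_mod_cast hb2
  have hbz : (b : ℤ) ≤ 3 * i + 5 := by exact_mod_cast hb
  have hPpent : P = PIPPentagon.pentagon ((i : ℤ) : ℝ) ((b : ℤ) : ℝ) := by
    rw [hP, Int.cast_natCast, Int.cast_natCast]
    exact PIPPentagon.convexHull_vertices (by exact_mod_cast hi) (by exact_mod_cast hb2)
      (by exact_mod_cast hb)
  rw [hPpent]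
  refine ⟨PIPPentagon.isRatPolygon_pentagon hiz hb₂z hbz,
    PIPPentagon.hasDenom_pentagon hiz hb₂z hbz, PIPPentagon.isPIP_pentagon hiz hb₂z hbz, ?_, ?_⟩
  · simpa using PIPPentagon.ncard_interior_pentagon_inter_latticePts (i := i) (b : ℝ) (by omega)
  · exact_mod_cast PIPPentagon.ncard_frontier_pentagon_inter_latticePts hiz hb₂z hbz
end

section
/- For all positive integers i and b with 2 ≤ b ≤ 4i + 4, there exists a rational convex polygon P ⊂ ℝ² of denominator 4 that is pseudointegral, has exactly i lattice points in its interior, and has exactly b lattice points on its boundary. In fact, one may take P = conv{(i,0), (0,1/4), (−1,−1/2), (−1,−1), (b−3,−1), (i + (3/4)(b−4), −3/4)}. -/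
open Set Pointwise

/-!
`P` is cut out by six half-planes with integer data, so the lattice points of `t • P` can be
counted row by row: the row `y = n` is an interval whose right end is an affine function of `n`
on each of the ranges `n ≥ 0`, `-3t/4 ≤ n ≤ 0` and `n ≤ -3t/4`. The only edge that meets the
rows at non-integral abscissae is the one through `(0, t/4)` and `(-t, -t/2)`. We replace it by
`x ≥ -t`, `y ≤ ⌊t/4⌋` and subtract the corner triangle that this adds, counting the triangle by
columns, so that only floors with denominator 4 occur. Writing `t = 4s + r`, the
periodic parts cancel and `2 · ehr P t = (2i + b - 2) t² + b t + 2`. At `t = 1` this gives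
`i + b` lattice points, and the interior ones are `(0, 0), …, (i - 1, 0)`. The denominator is 4
because `4P` has integral vertices and `(0, k/4)` is an exposed point of `kP`.
-/

namespace PseudointegralHexagon

def linForm (a c : ℝ) : StrongDual ℝ (ℝ × ℝ) :=
  a • ContinuousLinearMap.fst ℝ ℝ ℝ + c • ContinuousLinearMap.snd ℝ ℝ ℝ

@[simp]
theorem linForm_apply (a c : ℝ) (p : ℝ × ℝ) : linForm a c p = a * p.1 + c * p.2 := rfl

def halfPlane (a c d : ℝ) : Set (ℝ × ℝ) := linForm a c ⁻¹' Iic d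

theorem convex_halfPlane (a c d : ℝ) : Convex ℝ (halfPlane a c d) :=
  convex_halfSpace_le (linForm a c).isLinear d

theorem isClosed_halfPlane (a c d : ℝ) : IsClosed (halfPlane a c d) :=
  isClosed_Iic.preimage (linForm a c).continuous

theorem smul_halfPlane {t : ℝ} (ht : 0 < t) (a c d : ℝ) :
    t • halfPlane a c d = halfPlane a c (t * d) := by
  ext p
  simp only [mem_smul_set_iff_inv_smul_mem₀ ht.ne', halfPlane, mem_preimage, mem_Iic, map_smul,
    smul_eq_mul, inv_mul_le_iff₀ ht]

theorem interior_halfPlane {a c : ℝ} (h : a ≠ 0 ∨ c ≠ 0) (d : ℝ) :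
    interior (halfPlane a c d) = {p | a * p.1 + c * p.2 < d} := by
  have hne : linForm a c ≠ 0 := by
    intro h0
    rcases h with h | h
    · exact h (by simpa using congrArg (· ((1 : ℝ), (0 : ℝ))) h0)
    · exact h (by simpa using congrArg (· ((0 : ℝ), (1 : ℝ))) h0)
  rw [halfPlane, ← ((linForm a c).isOpenMap_of_ne_zero hne).preimage_interior_eq_interior_preimage
      (linForm a c).continuous, interior_Iic]
  rfl

/-- The dilate `t • P`, by its six edge inequalities. -/
def hexagon (i b t : ℝ) : Set (ℝ × ℝ) :=
  halfPlane 0 (-1) t ∩ halfPlane (-1) 0 t ∩ halfPlane (-3) 4 t ∩ halfPlane 1 (4 * i) (t * i) ∩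
    halfPlane 1 (b - 4) (t * i) ∩ halfPlane 1 (b - 4 * i) (t * (4 * i - 3))

def hexagonVertices (i b : ℝ) : Set (ℝ × ℝ) :=
  {(i, 0), (0, 1/4), (-1, -(1/2)), (-1, -1), (b - 3, -1), (i + (3/4) * (b - 4), -(3/4))}

theorem mk_mem_convexHull_of_segments {s : Set (ℝ × ℝ)} {u₁ w₁ u₂ w₂ : ℝ × ℝ} {θ₁ θ₂ x y : ℝ}
    (hu₁ : u₁ ∈ s) (hw₁ : w₁ ∈ s) (hu₂ : u₂ ∈ s) (hw₂ : w₂ ∈ s)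
    (hθ₁ : θ₁ ∈ Icc (0 : ℝ) 1) (hθ₂ : θ₂ ∈ Icc (0 : ℝ) 1)
    (hy₁ : θ₁ * u₁.2 + (1 - θ₁) * w₁.2 = y) (hy₂ : θ₂ * u₂.2 + (1 - θ₂) * w₂.2 = y)
    (hx₁ : θ₁ * u₁.1 + (1 - θ₁) * w₁.1 ≤ x) (hx₂ : x ≤ θ₂ * u₂.1 + (1 - θ₂) * w₂.1) :
    (x, y) ∈ convexHull ℝ s := by
  have hcombo : ∀ {u w : ℝ × ℝ} {θ : ℝ}, u ∈ s → w ∈ s → θ ∈ Icc (0 : ℝ) 1 →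
      (θ * u.1 + (1 - θ) * w.1, θ * u.2 + (1 - θ) * w.2) ∈ convexHull ℝ s := by
    intro u w θ hu hw hθ
    convert convex_convexHull ℝ s (subset_convexHull ℝ s hu) (subset_convexHull ℝ s hw) hθ.1
      (sub_nonneg.2 hθ.2) (add_sub_cancel θ 1) using 1
    ext <;> simp
  have hseg : (x, y) ∈ segment ℝ (θ₁ * u₁.1 + (1 - θ₁) * w₁.1, y)
      (θ₂ * u₂.1 + (1 - θ₂) * w₂.1, y) := by
    rw [← Prod.image_mk_segment_left, segment_eq_Icc (hx₁.trans hx₂)]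
    exact ⟨x, ⟨hx₁, hx₂⟩, rfl⟩
  have hl := hcombo hu₁ hw₁ hθ₁
  have hr := hcombo hu₂ hw₂ hθ₂
  rw [hy₁] at hl
  rw [hy₂] at hr
  exact (convex_convexHull ℝ s).segment_subset hl hr hseg

section Hexagon

variable {i b t : ℝ}

theorem mem_hexagon {p : ℝ × ℝ} :
    p ∈ hexagon i b t ↔ -t ≤ p.2 ∧ -t ≤ p.1 ∧ 4 * p.2 ≤ t + 3 * p.1 ∧
      p.1 + 4 * i * p.2 ≤ t * i ∧ p.1 + (b - 4) * p.2 ≤ t * i ∧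
      p.1 + (b - 4 * i) * p.2 ≤ t * (4 * i - 3) := by
  simp only [hexagon, halfPlane, mem_inter_iff, mem_preimage, mem_Iic, linForm_apply]
  constructor
  · rintro ⟨⟨⟨⟨⟨h₁, h₂⟩, h₃⟩, h₄⟩, h₅⟩, h₆⟩
    exact ⟨by linarith, by linarith, by linarith, by linarith, by linarith, by linarith⟩
  · rintro ⟨h₁, h₂, h₃, h₄, h₅, h₆⟩
    exact ⟨⟨⟨⟨⟨by linarith, by linarith⟩, by linarith⟩, by linarith⟩, by linarith⟩, by linarith⟩

theorem mem_interior_hexagon {p : ℝ × ℝ} :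
    p ∈ interior (hexagon i b t) ↔ -t < p.2 ∧ -t < p.1 ∧ 4 * p.2 < t + 3 * p.1 ∧
      p.1 + 4 * i * p.2 < t * i ∧ p.1 + (b - 4) * p.2 < t * i ∧
      p.1 + (b - 4 * i) * p.2 < t * (4 * i - 3) := by
  simp only [hexagon, interior_inter, interior_halfPlane (Or.inr (by norm_num : (-1 : ℝ) ≠ 0)),
    interior_halfPlane (Or.inl (by norm_num : (-1 : ℝ) ≠ 0)),
    interior_halfPlane (Or.inl (by norm_num : (-3 : ℝ) ≠ 0)),
    interior_halfPlane (Or.inl one_ne_zero), mem_inter_iff, mem_ofPred_eq]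
  constructor
  · rintro ⟨⟨⟨⟨⟨h₁, h₂⟩, h₃⟩, h₄⟩, h₅⟩, h₆⟩
    exact ⟨by linarith, by linarith, by linarith, by linarith, by linarith, by linarith⟩
  · rintro ⟨h₁, h₂, h₃, h₄, h₅, h₆⟩
    exact ⟨⟨⟨⟨⟨by linarith, by linarith⟩, by linarith⟩, by linarith⟩, by linarith⟩, by linarith⟩

theorem convex_hexagon : Convex ℝ (hexagon i b t) := by
  simp only [hexagon]
  repeat' apply Convex.inter
  all_goals exact convex_halfPlane _ _ _

theorem isClosed_hexagon : IsClosed (hexagon i b t) := by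
  simp only [hexagon]
  repeat' apply IsClosed.inter
  all_goals exact isClosed_halfPlane _ _ _

theorem smul_hexagon (ht : 0 < t) : t • hexagon i b 1 = hexagon i b t := by
  simp only [hexagon, smul_set_inter₀ ht.ne', smul_halfPlane ht, mul_one, one_mul]

theorem hexagonVertices_subset (hi : 1 ≤ i) (hb₂ : 2 ≤ b) (hb : b ≤ 4 * i + 4) :
    hexagonVertices i b ⊆ hexagon i b 1 := by
  intro p hp
  simp only [hexagonVertices, mem_insert_iff, mem_singleton_iff] at hp
  rw [mem_hexagon]
  rcases hp with rfl | rfl | rfl | rfl | rfl | rfl <;>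
    refine ⟨?_, ?_, ?_, ?_, ?_, ?_⟩ <;> norm_num <;> nlinarith

theorem convexHull_hexagonVertices (hi : 1 ≤ i) (hb₂ : 2 ≤ b) (hb : b ≤ 4 * i + 4) :
    convexHull ℝ (hexagonVertices i b) = hexagon i b 1 := by
  refine (convexHull_min (hexagonVertices_subset hi hb₂ hb) convex_hexagon).antisymm ?_
  rintro ⟨x, y⟩ hp
  obtain ⟨h₁, h₂, h₃, h₄, h₅, h₆⟩ := mem_hexagon.1 hp
  dsimp only at h₁ h₂ h₃ h₄ h₅ h₆
  have hA : (i, 0) ∈ hexagonVertices i b := by simp [hexagonVertices]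
  have hB : (0, 1/4) ∈ hexagonVertices i b := by simp [hexagonVertices]
  have hC : (-1, -(1/2)) ∈ hexagonVertices i b := by simp [hexagonVertices]
  have hD : (-1, -1) ∈ hexagonVertices i b := by simp [hexagonVertices]
  have hE : (b - 3, -1) ∈ hexagonVertices i b := by simp [hexagonVertices]
  have hF : (i + (3/4) * (b - 4), -(3/4)) ∈ hexagonVertices i b := by simp [hexagonVertices]
  have hy : y ≤ 1/4 := by nlinarith
  -- in each of the four bands of heights, `(x, y)` lies between a point of the left edge and a
  -- point of the right edge at height `y`
  rcases le_total 0 y with hy₀ | hy₀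
  · refine mk_mem_convexHull_of_segments hB hC hB hA (θ₁ := 2/3 * (2 * y + 1)) (θ₂ := 4 * y)
      ⟨?_, ?_⟩ ⟨?_, ?_⟩ ?_ ?_ ?_ ?_ <;> (try dsimp only) <;> linarith
  rcases le_total (-(1/2)) y with hy₁ | hy₁
  · refine mk_mem_convexHull_of_segments hB hC hA hF (θ₁ := 2/3 * (2 * y + 1))
      (θ₂ := (4 * y + 3) / 3) ⟨?_, ?_⟩ ⟨?_, ?_⟩ ?_ ?_ ?_ ?_ <;> (try dsimp only) <;> linarith
  rcases le_total (-(3/4)) y with hy₂ | hy₂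
  · refine mk_mem_convexHull_of_segments hC hD hA hF (θ₁ := 2 * y + 2)
      (θ₂ := (4 * y + 3) / 3) ⟨?_, ?_⟩ ⟨?_, ?_⟩ ?_ ?_ ?_ ?_ <;> (try dsimp only) <;> linarith
  · refine mk_mem_convexHull_of_segments hC hD hE hF (θ₁ := 2 * y + 2)
      (θ₂ := -(4 * y + 3)) ⟨?_, ?_⟩ ⟨?_, ?_⟩ ?_ ?_ ?_ ?_ <;> (try dsimp only) <;> linarith

theorem snd_le_of_mem_hexagon (hi : 0 ≤ i) {p : ℝ × ℝ} (hp : p ∈ hexagon i b t) :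
    p.2 ≤ t / 4 ∧ (t / 4 ≤ p.2 → p = (0, t / 4)) := by
  obtain ⟨-, -, h₃, h₄, -, -⟩ := mem_hexagon.1 hp
  have hy : p.2 ≤ t / 4 := by nlinarith
  refine ⟨hy, fun hy' => Prod.ext ?_ (le_antisymm hy hy')⟩
  rw [le_antisymm hy hy'] at h₃ h₄
  dsimp only
  linarith

theorem top_mem_hexagon (hi : 1 ≤ i) (hb : b ≤ 4 * i + 4) (ht : 0 ≤ t) :
    ((0 : ℝ), t / 4) ∈ hexagon i b t := by
  rw [mem_hexagon]
  refine ⟨?_, ?_, ?_, ?_, ?_, ?_⟩ <;> dsimp only <;> nlinarith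

theorem top_mem_exposedPoints_hexagon (hi : 1 ≤ i) (hb : b ≤ 4 * i + 4) (ht : 0 ≤ t) :
    ((0 : ℝ), t / 4) ∈ (hexagon i b t).exposedPoints ℝ :=
  ⟨top_mem_hexagon hi hb ht, ContinuousLinearMap.snd ℝ ℝ ℝ, fun _ hp =>
    snd_le_of_mem_hexagon (by linarith) hp⟩

end Hexagon

theorem setOf_fiberwise_eq (a : ℤ) (K : ℕ) (lo hi : ℤ → ℤ) :
    {p : ℤ × ℤ | a ≤ p.2 ∧ p.2 < a + K ∧ lo p.2 ≤ p.1 ∧ p.1 ≤ hi p.2} =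
      ↑((Finset.range K).biUnion fun k =>
        Finset.Icc (lo (a + k)) (hi (a + k)) ×ˢ {a + (k : ℤ)}) := by
  ext ⟨m, n⟩
  simp only [mem_ofPred_eq, Finset.coe_biUnion, Finset.coe_range, mem_iUnion, Finset.coe_product,
    Finset.coe_Icc, Finset.coe_singleton, mem_prod, mem_Icc, mem_singleton_iff, mem_Iio,
    exists_prop]
  constructor
  · rintro ⟨h₁, h₂, h₃, h₄⟩
    refine ⟨(n - a).toNat, by omega, ?_, by omega⟩
    rw [Int.toNat_of_nonneg (by omega), add_sub_cancel]
    exact ⟨h₃, h₄⟩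
  · rintro ⟨k, hk, ⟨h₃, h₄⟩, rfl⟩
    exact ⟨by omega, by omega, h₃, h₄⟩

theorem finite_setOf_fiberwise (a : ℤ) (K : ℕ) (lo hi : ℤ → ℤ) :
    {p : ℤ × ℤ | a ≤ p.2 ∧ p.2 < a + K ∧ lo p.2 ≤ p.1 ∧ p.1 ≤ hi p.2}.Finite := by
  rw [setOf_fiberwise_eq]
  exact Finset.finite_toSet _

theorem ncard_setOf_fiberwise (a : ℤ) (K : ℕ) (lo hi : ℤ → ℤ)
    (h : ∀ k < K, lo (a + k) ≤ hi (a + k) + 1) :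
    ({p : ℤ × ℤ | a ≤ p.2 ∧ p.2 < a + K ∧ lo p.2 ≤ p.1 ∧ p.1 ≤ hi p.2}.ncard : ℤ) =
      ∑ k ∈ Finset.range K, (hi (a + k) + 1 - lo (a + k)) := by
  rw [setOf_fiberwise_eq, ncard_coe_finset, Finset.card_biUnion]
  · push_cast
    refine Finset.sum_congr rfl fun k hk => ?_
    rw [Finset.card_product, Finset.card_singleton, mul_one, Int.card_Icc,
      Int.toNat_of_nonneg (by linarith [h k (Finset.mem_range.1 hk)])]
  · intro k _ l _ hkl
    simp only [Function.onFun, Finset.disjoint_left, Finset.mem_product, Finset.mem_singleton]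
    rintro p ⟨-, hk⟩ ⟨-, hl⟩
    exact hkl (by omega)

theorem two_mul_sum_range_eq_of_affine {f : ℕ → ℤ} {α β : ℤ} {K : ℕ}
    (hf : ∀ k < K, f k = α + β * k) :
    2 * ∑ k ∈ Finset.range K, f k = K * (2 * α + β * (K - 1)) := by
  induction K with
  | zero => simp
  | succ K ih =>
    rw [Finset.sum_range_succ, mul_add, ih fun k hk => hf k (by omega), hf K K.lt_succ_self]
    push_cast
    ring

theorem sum_range_three_mul_sub_ediv_four (s r : ℕ) (hr : r < 4) :
    ∑ k ∈ Finset.range (4 * s + r), ((3 * k - 2 * (4 * s + r) : ℤ) / 4) =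
      -(2 * s ^ 2 + s * r + 3 * s + r) := by
  induction s with
  | zero => interval_cases r <;> simp [Finset.sum_range_succ]
  | succ s ih =>
    have hshift : ∀ k ∈ Finset.range (4 * s + r),
        (3 * k - 2 * (4 * (s + 1 : ℕ) + r) : ℤ) / 4 = (3 * k - 2 * (4 * s + r) : ℤ) / 4 - 2 := by
      intro k _
      push_cast
      omega
    -- four consecutive values of `3k` run through all residues mod 4
    have htail : ∑ j ∈ Finset.range 4,
        (3 * ((4 * s + r + j : ℕ) : ℤ) - 2 * (4 * (s + 1 : ℕ) + r) : ℤ) / 4 = 4 * s + r - 5 := by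
      simp only [Finset.sum_range_succ, Finset.sum_range_zero]
      push_cast
      omega
    rw [show 4 * (s + 1) + r = 4 * s + r + 4 by ring, Finset.sum_range_add,
      Finset.sum_congr rfl hshift, Finset.sum_sub_distrib, ih]
    push_cast at htail ⊢
    rw [htail]
    simp only [Finset.sum_const, Finset.card_range, nsmul_eq_mul]
    push_cast
    ring

def intHexagon (i b : ℤ) (t : ℕ) : Set (ℤ × ℤ) :=
  {p | -t ≤ p.2 ∧ -t ≤ p.1 ∧ 4 * p.2 ≤ t + 3 * p.1 ∧ p.1 + 4 * i * p.2 ≤ t * i ∧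
    p.1 + (b - 4) * p.2 ≤ t * i ∧ p.1 + (b - 4 * i) * p.2 ≤ t * (4 * i - 3)}

def rightEnd (i b : ℤ) (t : ℕ) (n : ℤ) : ℤ :=
  min (t * i - 4 * i * n) (min (t * i - (b - 4) * n) (t * (4 * i - 3) - (b - 4 * i) * n))

def hexagonWithCorner (i b : ℤ) (t : ℕ) : Set (ℤ × ℤ) :=
  {p | -t ≤ p.2 ∧ p.2 ≤ t / 4 ∧ -t ≤ p.1 ∧ p.1 ≤ rightEnd i b t p.2}

def cornerTriangle (t : ℕ) : Set (ℤ × ℤ) :=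
  {p | -t ≤ p.1 ∧ p.2 ≤ t / 4 ∧ t + 3 * p.1 < 4 * p.2}

section LatticeCount

variable {i b n : ℤ} {t : ℕ}

theorem rightEnd_of_nonneg (hi : 1 ≤ i) (hb : b ≤ 4 * i + 4) (hn : 0 ≤ n) :
    rightEnd i b t n = t * i - 4 * i * n := by
  refine min_eq_left (le_min ?_ ?_) <;>
    nlinarith [mul_nonneg (sub_nonneg.2 hb) hn,
      mul_nonneg (sub_nonneg.2 hi) (t.cast_nonneg' : (0 : ℤ) ≤ t)]

theorem rightEnd_of_nonpos (hi : 1 ≤ i) (hb : b ≤ 4 * i + 4) (hn : n ≤ 0)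
    (hn' : -3 * t ≤ 4 * n) : rightEnd i b t n = t * i - (b - 4) * n := by
  have h₂₃ : t * i - (b - 4) * n ≤ t * (4 * i - 3) - (b - 4 * i) * n := by
    nlinarith [mul_nonneg (sub_nonneg.2 hi) (by linarith : (0 : ℤ) ≤ 3 * t + 4 * n)]
  have h₂₁ : t * i - (b - 4) * n ≤ t * i - 4 * i * n := by
    nlinarith [mul_nonneg (sub_nonneg.2 hb) (neg_nonneg.2 hn)]
  rw [rightEnd, min_eq_left h₂₃, min_eq_right h₂₁]

theorem rightEnd_of_le (hi : 1 ≤ i) (hb : b ≤ 4 * i + 4) (hn : 4 * n ≤ -3 * t) :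
    rightEnd i b t n = t * (4 * i - 3) - (b - 4 * i) * n := by
  have h₂₃ : t * (4 * i - 3) - (b - 4 * i) * n ≤ t * i - (b - 4) * n := by
    nlinarith [mul_nonneg (sub_nonneg.2 hi) (by linarith : (0 : ℤ) ≤ -(3 * t + 4 * n))]
  have h₂₁ : t * i - (b - 4) * n ≤ t * i - 4 * i * n := by
    nlinarith [mul_nonneg (sub_nonneg.2 hb)
      (by linarith [(t.cast_nonneg' : (0 : ℤ) ≤ t)] : (0 : ℤ) ≤ -n)]
  rw [rightEnd, min_eq_right h₂₃, min_eq_right (h₂₃.trans h₂₁)]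

theorem neg_le_rightEnd (hi : 1 ≤ i) (hb₂ : 2 ≤ b) (hb : b ≤ 4 * i + 4) (h₁ : -t ≤ n)
    (h₂ : 4 * n ≤ t) : -t ≤ rightEnd i b t n := by
  have ht : (0 : ℤ) ≤ t := t.cast_nonneg'
  rcases le_total 0 n with hn | hn
  · rw [rightEnd_of_nonneg hi hb hn]
    nlinarith [mul_nonneg (by linarith : (0 : ℤ) ≤ i) (by linarith : (0 : ℤ) ≤ t - 4 * n)]
  rcases le_total (-3 * (t : ℤ)) (4 * n) with hn' | hn'
  · rw [rightEnd_of_nonpos hi hb hn hn']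
    nlinarith [mul_nonneg (by linarith : (0 : ℤ) ≤ b - 2) (neg_nonneg.2 hn),
      mul_nonneg (sub_nonneg.2 hi) ht]
  rw [rightEnd_of_le hi hb hn']
  rcases le_total b (4 * i) with hb' | hb'
  · nlinarith [mul_nonneg (sub_nonneg.2 hb') (by linarith : (0 : ℤ) ≤ t + n),
      mul_nonneg (by linarith : (0 : ℤ) ≤ b - 2) ht]
  · nlinarith [mul_nonneg (sub_nonneg.2 hb') (neg_nonneg.2 hn), mul_nonneg (sub_nonneg.2 hi) ht]

theorem rightEnd_nonneg (hi : 1 ≤ i) (hb₂ : 2 ≤ b) (hb : b ≤ 4 * i + 4) (h₁ : -t ≤ 2 * n)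
    (h₂ : 4 * n ≤ t) : 0 ≤ rightEnd i b t n := by
  have ht : (0 : ℤ) ≤ t := t.cast_nonneg'
  rcases le_total 0 n with hn | hn
  · rw [rightEnd_of_nonneg hi hb hn]
    nlinarith [mul_nonneg (by linarith : (0 : ℤ) ≤ i) (by linarith : (0 : ℤ) ≤ t - 4 * n)]
  · rw [rightEnd_of_nonpos hi hb hn (by linarith)]
    nlinarith [mul_nonneg (by linarith : (0 : ℤ) ≤ b - 2) (neg_nonneg.2 hn),
      mul_nonneg (sub_nonneg.2 hi) ht]

theorem intHexagon_eq_diff (hi : 0 ≤ i) :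
    intHexagon i b t = hexagonWithCorner i b t \ cornerTriangle t := by
  ext ⟨m, n⟩
  simp only [intHexagon, hexagonWithCorner, cornerTriangle, rightEnd, mem_sdiff, mem_ofPred_eq,
    le_min_iff]
  constructor
  · rintro ⟨h₁, h₂, h₃, h₄, h₅, h₆⟩
    have : 4 * n ≤ t := by nlinarith
    exact ⟨⟨h₁, by omega, h₂, by linarith, by linarith, by linarith⟩, by omega⟩
  · rintro ⟨⟨h₁, hq, h₂, h₄, h₅, h₆⟩, hT⟩
    exact ⟨h₁, h₂, not_lt.1 fun h₃ => hT ⟨h₂, hq, h₃⟩, by linarith, by linarith, by linarith⟩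

theorem cornerTriangle_subset (hi : 1 ≤ i) (hb₂ : 2 ≤ b) (hb : b ≤ 4 * i + 4) :
    cornerTriangle t ⊆ hexagonWithCorner i b t := by
  intro p ⟨h₁, h₂, h₃⟩
  have hp : p.1 < 0 := by omega
  exact ⟨by omega, h₂, h₁, hp.le.trans (rightEnd_nonneg hi hb₂ hb (by omega) (by omega))⟩

theorem hexagonWithCorner_eq (i b : ℤ) (t : ℕ) :
    hexagonWithCorner i b t =
      {p : ℤ × ℤ | -t ≤ p.2 ∧ p.2 < -t + (t + t / 4 + 1 : ℕ) ∧ -t ≤ p.1 ∧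
        p.1 ≤ rightEnd i b t p.2} := by
  ext p
  simp only [hexagonWithCorner, mem_ofPred_eq]
  omega

theorem finite_hexagonWithCorner (i b : ℤ) (t : ℕ) : (hexagonWithCorner i b t).Finite := by
  rw [hexagonWithCorner_eq]
  exact finite_setOf_fiberwise (-t) _ (fun _ => -t) _

theorem two_mul_ncard_hexagonWithCorner (hi : 1 ≤ i) (hb₂ : 2 ≤ b) (hb : b ≤ 4 * i + 4) :
    2 * ((hexagonWithCorner i b t).ncard : ℤ) =
      (t - 3 * t / 4 : ℕ) * (2 * ((b - 2) * t + 1) + (4 * i - b) * ((t - 3 * t / 4 : ℕ) - 1)) +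
      (3 * t / 4 : ℕ) * (2 * ((i + 1) * t + (b - 4) * (3 * t / 4 : ℕ) + 1) +
        (4 - b) * ((3 * t / 4 : ℕ) - 1)) +
      (t / 4 + 1 : ℕ) * (2 * ((i + 1) * t + 1) - 4 * i * (t / 4 : ℕ)) := by
  rw [hexagonWithCorner_eq, ncard_setOf_fiberwise (-t) _ (fun _ => -t) _ fun k hk => by
      linarith [neg_le_rightEnd hi hb₂ hb (t := t) (n := -t + k) (by omega) (by omega)],
    show t + t / 4 + 1 = (t - 3 * t / 4) + (3 * t / 4 + (t / 4 + 1)) by omega,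
    Finset.sum_range_add, Finset.sum_range_add, mul_add, mul_add,
    two_mul_sum_range_eq_of_affine (α := (b - 2) * t + 1) (β := 4 * i - b),
    two_mul_sum_range_eq_of_affine (α := (i + 1) * t + (b - 4) * (3 * t / 4 : ℕ) + 1)
      (β := 4 - b),
    two_mul_sum_range_eq_of_affine (α := (i + 1) * t + 1) (β := -4 * i)]
  · push_cast
    ring
  · intro k hk
    rw [show -(t : ℤ) + ((t - 3 * t / 4 + (3 * t / 4 + k) : ℕ) : ℤ) = k by omega,
      rightEnd_of_nonneg hi hb (by omega)]
    ring
  · intro k hk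
    rw [show -(t : ℤ) + ((t - 3 * t / 4 + k : ℕ) : ℤ) = k - (3 * t / 4 : ℕ) by omega,
      rightEnd_of_nonpos hi hb (by omega) (by omega)]
    ring
  · intro k hk
    rw [rightEnd_of_le hi hb (by omega)]
    ring

theorem ncard_cornerTriangle (s r : ℕ) (hr : r < 4) :
    ((cornerTriangle (4 * s + r)).ncard : ℤ) = 6 * s ^ 2 + 2 * s * r + 3 * s + r := by
  set t := 4 * s + r with ht
  have hswap : cornerTriangle t = Prod.swap '' {p : ℤ × ℤ | -t ≤ p.2 ∧ p.2 < -t + t ∧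
      (t + 3 * p.2) / 4 + 1 ≤ p.1 ∧ p.1 ≤ t / 4} := by
    rw [image_swap_eq_preimage_swap]
    ext p
    simp only [cornerTriangle, mem_preimage, Prod.fst_swap, Prod.snd_swap, mem_ofPred_eq]
    omega
  have hcol : ∀ k : ℕ, (t : ℤ) / 4 + 1 - ((t + 3 * (-t + k)) / 4 + 1) =
      s - (3 * k - 2 * (4 * s + r) : ℤ) / 4 := fun k => by
    rw [show (t : ℤ) + 3 * (-t + k) = 3 * k - 2 * (4 * s + r) by push_cast [ht]; ring,
      show (t : ℤ) / 4 = s by omega]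
    ring
  rw [hswap, ncard_image_of_injective _ Prod.swap_injective,
    ncard_setOf_fiberwise (-t) t (fun m => (t + 3 * m) / 4 + 1) (fun _ => t / 4)
      fun k hk => by omega,
    Finset.sum_congr rfl fun k _ => hcol k, Finset.sum_sub_distrib,
    sum_range_three_mul_sub_ediv_four s r hr]
  simp only [Finset.sum_const, Finset.card_range, nsmul_eq_mul, ht]
  push_cast
  ring

theorem two_mul_ncard_intHexagon (hi : 1 ≤ i) (hb₂ : 2 ≤ b) (hb : b ≤ 4 * i + 4) (t : ℕ) :
    2 * ((intHexagon i b t).ncard : ℤ) = (2 * i + b - 2) * t ^ 2 + b * t + 2 := by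
  have hsub := cornerTriangle_subset hi hb₂ hb (t := t)
  have hfin := finite_hexagonWithCorner i b t
  rw [intHexagon_eq_diff (by linarith), ncard_sdiff hsub (hfin.subset hsub),
    Nat.cast_sub (ncard_le_ncard hsub hfin), mul_sub, two_mul_ncard_hexagonWithCorner hi hb₂ hb]
  obtain ⟨s, r, hr, rfl⟩ : ∃ s r, r < 4 ∧ t = 4 * s + r :=
    ⟨t / 4, t % 4, Nat.mod_lt _ (by norm_num), (Nat.div_add_mod t 4).symm⟩
  rw [ncard_cornerTriangle s r hr, show (4 * s + r) / 4 = s by omega,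
    show 3 * (4 * s + r) / 4 = 3 * s + 3 * r / 4 by omega,
    show 4 * s + r - (3 * s + 3 * r / 4) = s + (r - 3 * r / 4) by omega]
  push_cast
  interval_cases r <;> norm_num <;> ring

theorem finite_intHexagon (hi : 0 ≤ i) (t : ℕ) : (intHexagon i b t).Finite := by
  rw [intHexagon_eq_diff hi]
  exact (finite_hexagonWithCorner i b t).sdiff

end LatticeCount

section LatticePoints

variable {i b : ℤ}

theorem injective_intCast_prodMap :
    Function.Injective (Prod.map (Int.cast : ℤ → ℝ) (Int.cast : ℤ → ℝ)) :=
  Prod.map_injective.2 ⟨Int.cast_injective, Int.cast_injective⟩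

theorem intCast_mem_hexagon {t : ℕ} {p : ℤ × ℤ} :
    Prod.map Int.cast Int.cast p ∈ hexagon i b t ↔ p ∈ intHexagon i b t := by
  rw [mem_hexagon]
  simp only [Prod.map_fst, Prod.map_snd, intHexagon, mem_ofPred_eq]
  norm_cast

theorem hexagon_inter_latticePts (i b : ℤ) (t : ℕ) :
    hexagon i b t ∩ latticePts = Prod.map Int.cast Int.cast '' intHexagon i b t := by
  ext x
  constructor
  · rintro ⟨hp, m, n, rfl⟩
    exact ⟨(m, n), intCast_mem_hexagon.1 hp, rfl⟩
  · rintro ⟨p, hp, rfl⟩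
    exact ⟨intCast_mem_hexagon.2 hp, p.1, p.2, rfl⟩

theorem two_mul_ncard_hexagon_inter_latticePts (hi : 1 ≤ i) (hb₂ : 2 ≤ b) (hb : b ≤ 4 * i + 4)
    (t : ℕ) :
    2 * ((hexagon i b t ∩ latticePts).ncard : ℤ) = (2 * i + b - 2) * t ^ 2 + b * t + 2 := by
  rw [hexagon_inter_latticePts, ncard_image_of_injective _ injective_intCast_prodMap]
  exact two_mul_ncard_intHexagon hi hb₂ hb t

theorem interior_hexagon_inter_latticePts (hi : 1 ≤ i) :
    interior (hexagon i b 1) ∩ latticePts =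
      Prod.map Int.cast Int.cast '' ((Finset.Ico 0 i ×ˢ {0} : Finset (ℤ × ℤ)) : Set (ℤ × ℤ)) := by
  ext ⟨x, y⟩
  simp only [mem_inter_iff, mem_interior_hexagon, latticePts, mem_image, Finset.coe_product,
    Finset.coe_Ico, Finset.coe_singleton, mem_prod, mem_Ico, mem_singleton_iff, Prod.exists,
    Prod.map_apply, Prod.mk.injEq, mem_ofPred_eq]
  constructor
  · rintro ⟨⟨h₁, h₂, -, h₄, -, -⟩, m, n, rfl, rfl⟩
    have h₁ : -1 < n := by exact_mod_cast h₁
    have h₂ : -1 < m := by exact_mod_cast h₂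
    have h₄ : m + 4 * i * n < i := by exact_mod_cast (one_mul (i : ℝ)) ▸ h₄
    have hn : n = 0 := by
      by_contra hn
      nlinarith [mul_le_mul_of_nonneg_left (by omega : (1 : ℤ) ≤ n) (by omega : (0 : ℤ) ≤ i)]
    subst hn
    exact ⟨m, 0, ⟨⟨by omega, by omega⟩, rfl⟩, rfl, rfl⟩
  · rintro ⟨m, n, ⟨⟨hm₀, hm⟩, rfl⟩, rfl, rfl⟩
    refine ⟨?_, m, 0, rfl, rfl⟩
    have : (m : ℝ) < i := by exact_mod_cast hm
    have : (0 : ℝ) ≤ m := by exact_mod_cast hm₀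
    have : (1 : ℝ) ≤ i := by exact_mod_cast hi
    refine ⟨?_, ?_, ?_, ?_, ?_, ?_⟩ <;> push_cast <;> linarith

theorem ncard_interior_hexagon_inter_latticePts (hi : 1 ≤ i) :
    (interior (hexagon i b 1) ∩ latticePts).ncard = i.toNat := by
  rw [interior_hexagon_inter_latticePts hi, ncard_image_of_injective _ injective_intCast_prodMap,
    ncard_coe_finset, Finset.card_product, Finset.card_singleton, mul_one, Int.card_Ico, sub_zero]

theorem ncard_frontier_hexagon_inter_latticePts (hi : 1 ≤ i) (hb₂ : 2 ≤ b)
    (hb : b ≤ 4 * i + 4) : ((frontier (hexagon i b 1) ∩ latticePts).ncard : ℤ) = b := by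
  have hsub : interior (hexagon i b 1) ∩ latticePts ⊆ hexagon i b 1 ∩ latticePts :=
    inter_subset_inter_left _ interior_subset
  have hfin : (hexagon i b 1 ∩ latticePts).Finite := by
    rw [← Nat.cast_one, hexagon_inter_latticePts]
    exact (finite_intHexagon (by linarith) 1).image _
  have hcount := two_mul_ncard_hexagon_inter_latticePts hi hb₂ hb 1
  push_cast at hcount
  rw [isClosed_hexagon.frontier_eq, inter_sdiff_distrib_right,
    ncard_sdiff hsub (hfin.subset hsub), Nat.cast_sub (ncard_le_ncard hsub hfin),
    ncard_interior_hexagon_inter_latticePts hi, Int.toNat_of_nonneg (by linarith)]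
  linarith

theorem smul_hexagonVertices_subset_latticePts (i b : ℤ) :
    (4 : ℝ) • hexagonVertices i b ⊆ latticePts := by
  rintro _ ⟨p, hp, rfl⟩
  simp only [hexagonVertices, mem_insert_iff, mem_singleton_iff] at hp
  rcases hp with rfl | rfl | rfl | rfl | rfl | rfl
  · exact ⟨4 * i, 0, by ext <;> simp⟩
  · exact ⟨0, 1, by ext <;> norm_num⟩
  · exact ⟨-4, -2, by ext <;> norm_num⟩
  · exact ⟨-4, -4, by ext <;> norm_num⟩
  · exact ⟨4 * b - 12, -4, by ext <;> simp; ring⟩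
  · exact ⟨4 * i + 3 * b - 12, -3, by ext <;> norm_num; ring⟩

theorem hasDenom_convexHull_hexagonVertices (hi : 1 ≤ i) (hb₂ : 2 ≤ b) (hb : b ≤ 4 * i + 4) :
    HasDenom (convexHull ℝ (hexagonVertices i b)) 4 := by
  have hi' : (1 : ℝ) ≤ i := by exact_mod_cast hi
  have hb₂' : (2 : ℝ) ≤ b := by exact_mod_cast hb₂
  have hb' : (b : ℝ) ≤ 4 * i + 4 := by exact_mod_cast hb
  refine ⟨⟨by norm_num, ?_⟩, fun k ⟨hk, hext⟩ => ?_⟩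
  · rw [Nat.cast_ofNat, ← convexHull_smul]
    exact extremePoints_convexHull_subset.trans (smul_hexagonVertices_subset_latticePts i b)
  · have hk' : (0 : ℝ) < k := by exact_mod_cast hk
    rw [convexHull_hexagonVertices hi' hb₂' hb', smul_hexagon hk'] at hext
    obtain ⟨m, n, hmn⟩ := hext (exposedPoints_subset_extremePoints
      (top_mem_exposedPoints_hexagon hi' hb' hk'.le))
    have : (k : ℤ) = 4 * n := by
      have := congrArg Prod.snd hmn
      dsimp only at this
      exact_mod_cast (by linarith : (k : ℝ) = 4 * n)
    omega

theorem isRatPolygon_hexagon (hi : 1 ≤ i) (hb₂ : 2 ≤ b) (hb : b ≤ 4 * i + 4) :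
    IsRatPolygon (hexagon i b 1) := by
  refine ⟨{((i : ℚ), 0), (0, 1/4), (-1, -(1/2)), (-1, -1), ((b : ℚ) - 3, -1),
    ((i : ℚ) + (3/4) * ((b : ℚ) - 4), -(3/4))}, ?_, ⟨(0, 0), ?_⟩⟩
  · rw [← convexHull_hexagonVertices (by exact_mod_cast hi) (by exact_mod_cast hb₂)
      (by exact_mod_cast hb)]
    congr 1
    simp [qpt, hexagonVertices, image_insert_eq]
  · have := (interior_hexagon_inter_latticePts (b := b) hi).ge
      ⟨(0, 0), by simp [show (0 : ℤ) < i by omega], rfl⟩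
    simpa using this.1

theorem isPIP_hexagon (hi : 1 ≤ i) (hb₂ : 2 ≤ b) (hb : b ≤ 4 * i + 4) :
    IsPIP (hexagon i b 1) := by
  refine ⟨.C ((2 * i + b - 2) / 2) * .X ^ 2 + .C (b / 2) * .X + 1, fun t ht => ?_⟩
  have hcount : 2 * (ehr (hexagon i b 1) t : ℚ) = (2 * i + b - 2) * t ^ 2 + b * t + 2 := by
    rw [ehr, smul_hexagon (by exact_mod_cast ht)]
    exact_mod_cast two_mul_ncard_hexagon_inter_latticePts hi hb₂ hb t
  simp only [Polynomial.eval_add, Polynomial.eval_mul, Polynomial.eval_pow, Polynomial.eval_C,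
    Polynomial.eval_X, Polynomial.eval_one]
  linarith

end LatticePoints

end PseudointegralHexagon

open PseudointegralHexagon in
/-- for all positive integers i, b with 2 ≤ b ≤ 4i + 4, the polygon
P = conv{(i,0), (0,1/4), (−1,−1/2), (−1,−1), (b−3,−1), (i + (3/4)(b−4), −3/4)}
is a rational convex polygon of denominator 4 that is pseudointegral, with
exactly i interior and b boundary lattice points. -/
theorem stmt_11 (i b : ℕ) (hi : 0 < i) (hb2 : 2 ≤ b) (hb : b ≤ 4 * i + 4)
    (P : Set (ℝ × ℝ))
    (hP : P = convexHull ℝ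
      ({((i : ℝ), 0), (0, 1/4), (-1, -(1/2)), (-1, -1), ((b : ℝ) - 3, -1),
        ((i : ℝ) + (3/4) * ((b : ℝ) - 4), -(3/4))} : Set (ℝ × ℝ))) :
    IsRatPolygon P ∧ HasDenom P 4 ∧ IsPIP P ∧
      (interior P ∩ latticePts).ncard = i ∧
      (frontier P ∩ latticePts).ncard = b := by
  have hi' : (1 : ℤ) ≤ i := by exact_mod_cast hi
  have hb₂' : (2 : ℤ) ≤ b := by exact_mod_cast hb2
  have hb' : (b : ℤ) ≤ 4 * i + 4 := by exact_mod_cast hb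
  have hPV : P = convexHull ℝ (hexagonVertices (i : ℤ) (b : ℤ)) := by
    simpa only [hexagonVertices, Int.cast_natCast] using hP
  have hPH : P = hexagon (i : ℤ) (b : ℤ) 1 :=
    hPV.trans (convexHull_hexagonVertices (by exact_mod_cast hi') (by exact_mod_cast hb₂')
      (by exact_mod_cast hb'))
  refine ⟨hPH ▸ isRatPolygon_hexagon hi' hb₂' hb',
    hPV ▸ hasDenom_convexHull_hexagonVertices hi' hb₂' hb', hPH ▸ isPIP_hexagon hi' hb₂' hb',
    ?_, ?_⟩
  · rw [hPH, ncard_interior_hexagon_inter_latticePts hi', Int.toNat_natCast]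
  · exact_mod_cast hPH ▸ ncard_frontier_hexagon_inter_latticePts hi' hb₂' hb'
end

section
/- Let u, v, w ∈ ℤ² be primitive vectors such that x := det(v,w), y := det(w,u), and z := det(u,v) are all positive, let α, β, γ ∈ ℚ, and suppose the set T := {a ∈ ℝ² : ⟨u,a⟩ ≤ α, ⟨v,a⟩ ≤ β, ⟨w,a⟩ ≤ γ} has nonempty interior (so T is a rational triangle with outer edge normals u, v, w). Then the edge E := {a ∈ T : ⟨u,a⟩ = α} of T has Euclidean length equal to ((αx + βy + γz)/(xyz)) · x · ‖u‖; equivalently, its lattice length (Euclidean length divided by the Euclidean length of a primitive lattice vector parallel to E) equals ((αx + βy + γz) · x)/(xyz). -/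
/-!
The edge lies on the line `⟨u, ·⟩ = α`, which we parametrise as `s ↦ p + s • u⊥` from the vertex
`p` where it meets `⟨v, ·⟩ = β`. Along this line `⟨v, ·⟩` increases with slope `z = det(u,v)` and
`⟨w, ·⟩` decreases with slope `y = det(w,u)`, so the edge is the parameter range `[-c, 0]`, where
the cyclic identity `x⟨u,a⟩ + y⟨v,a⟩ + z⟨w,a⟩ = 0` gives `c = (αx + βy + γz)/(yz)`. Its length is
`c‖u‖`, and `c ≥ 0` because the triangle is nonempty.
-/

open Set

/-- The standard inner product on ℝ². -/
def dotR (u a : ℝ × ℝ) : ℝ := u.1 * a.1 + u.2 * a.2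

/-- The coercion of an integer point of the plane to a real point. -/
def zpt (v : ℤ × ℤ) : ℝ × ℝ := ((v.1 : ℝ), (v.2 : ℝ))

def det2 (u v : ℝ × ℝ) : ℝ := u.1 * v.2 - u.2 * v.1

def perp (u : ℝ × ℝ) : ℝ × ℝ := (-u.2, u.1)

def triangle (u v w : ℝ × ℝ) (α β γ : ℝ) : Set (ℝ × ℝ) :=
  {a | dotR u a ≤ α ∧ dotR v a ≤ β ∧ dotR w a ≤ γ}

lemma dotR_add_smul (u a d : ℝ × ℝ) (s : ℝ) : dotR u (a + s • d) = dotR u a + s * dotR u d := by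
  simp only [dotR, Prod.fst_add, Prod.snd_add, Prod.smul_fst, Prod.smul_snd, smul_eq_mul]
  ring

lemma dotR_perp (u v : ℝ × ℝ) : dotR v (perp u) = det2 u v := by
  simp only [dotR, perp, det2]
  ring

lemma det2_self (u : ℝ × ℝ) : det2 u u = 0 := by
  simp only [det2]
  ring

lemma det2_swap (u v : ℝ × ℝ) : det2 v u = -det2 u v := by
  simp only [det2]
  ring

lemma det2_mul_dotR_add_add (u v w a : ℝ × ℝ) :
    det2 v w * dotR u a + det2 w u * dotR v a + det2 u v * dotR w a = 0 := by
  simp only [det2, dotR]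
  ring

lemma ne_zero_of_det2_ne_zero {u v : ℝ × ℝ} (h : det2 u v ≠ 0) : u ≠ 0 := by
  rintro rfl
  simp [det2] at h

lemma exists_dotR_eq_and_dotR_eq {u v : ℝ × ℝ} (h : det2 u v ≠ 0) (α β : ℝ) :
    ∃ p, dotR u p = α ∧ dotR v p = β := by
  refine ⟨((α * v.2 - β * u.2) / det2 u v, (β * u.1 - α * v.1) / det2 u v), ?_, ?_⟩ <;>
  · simp only [dotR]
    field_simp
    simp only [det2]
    ring

lemma exists_eq_add_smul_perp {u a p : ℝ × ℝ} (hu : u ≠ 0) (h : dotR u a = dotR u p) :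
    ∃ s : ℝ, a = p + s • perp u := by
  have hN : u.1 ^ 2 + u.2 ^ 2 ≠ 0 := by
    contrapose! hu
    ext <;> simp only [Prod.fst_zero, Prod.snd_zero] <;> nlinarith [sq_nonneg u.1, sq_nonneg u.2]
  refine ⟨det2 u (a - p) / (u.1 ^ 2 + u.2 ^ 2), ?_⟩
  simp only [dotR] at h
  ext <;> simp only [det2, perp, Prod.fst_add, Prod.snd_add, Prod.smul_fst, Prod.smul_snd,
    Prod.fst_sub, Prod.snd_sub, smul_eq_mul] <;> field_simp
  · linear_combination u.1 * h
  · linear_combination u.2 * h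

lemma image_add_smul_Icc {V : Type*} [AddCommGroup V] [Module ℝ V] (p d : V) {s t : ℝ}
    (h : s ≤ t) : (fun r : ℝ => p + r • d) '' Icc s t = segment ℝ (p + s • d) (p + t • d) := by
  have hlineMap : (fun r : ℝ => p + r • d) = AffineMap.lineMap p (p + d) := by
    funext r
    simp [AffineMap.lineMap_apply, add_comm]
  rw [← segment_eq_Icc h, hlineMap, image_segment, AffineMap.lineMap_apply, AffineMap.lineMap_apply]
  simp [add_comm]

lemma triangle_edge_eq_image {u v w p : ℝ × ℝ} {α β γ : ℝ} (hy : 0 < det2 w u)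
    (hz : 0 < det2 u v) (hpu : dotR u p = α) (hpv : dotR v p = β) :
    {a ∈ triangle u v w α β γ | dotR u a = α} =
      (fun s : ℝ => p + s • perp u) '' Icc ((dotR w p - γ) / det2 w u) 0 := by
  ext a
  simp only [triangle, mem_ofPred_eq, mem_image, mem_Icc]
  constructor
  · rintro ⟨⟨-, hav, haw⟩, hau⟩
    obtain ⟨s, rfl⟩ := exists_eq_add_smul_perp (ne_zero_of_det2_ne_zero hz.ne') (hau.trans hpu.symm)
    rw [dotR_add_smul, dotR_perp, hpv] at hav
    rw [dotR_add_smul, dotR_perp, det2_swap] at haw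
    refine ⟨s, ⟨?_, ?_⟩, rfl⟩
    · rw [div_le_iff₀ hy]; linarith
    · nlinarith
  · rintro ⟨s, ⟨hs₁, hs₂⟩, rfl⟩
    rw [div_le_iff₀ hy] at hs₁
    simp only [dotR_add_smul, dotR_perp, det2_self, hpu, hpv, det2_swap w u]
    refine ⟨⟨by simp, by nlinarith, by linarith⟩, by simp⟩

theorem triangle_edge_eq_segment {u v w : ℝ × ℝ} (hx : 0 < det2 v w) (hy : 0 < det2 w u)
    (hz : 0 < det2 u v) {α β γ : ℝ} (hT : (triangle u v w α β γ).Nonempty) :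
    ∃ p q : ℝ × ℝ, {a ∈ triangle u v w α β γ | dotR u a = α} = segment ℝ p q ∧
      Real.sqrt ((p.1 - q.1) ^ 2 + (p.2 - q.2) ^ 2) =
        (α * det2 v w + β * det2 w u + γ * det2 u v) / (det2 w u * det2 u v) *
          Real.sqrt (u.1 ^ 2 + u.2 ^ 2) := by
  obtain ⟨p, hpu, hpv⟩ := exists_dotR_eq_and_dotR_eq hz.ne' α β
  set c := (α * det2 v w + β * det2 w u + γ * det2 u v) / (det2 w u * det2 u v)
  have hc : (dotR w p - γ) / det2 w u = -c := by
    have hcyc := det2_mul_dotR_add_add u v w p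
    rw [hpu, hpv] at hcyc
    simp only [c]
    field_simp
    linear_combination hcyc
  have hc_nonneg : 0 ≤ c := by
    obtain ⟨a, hau, hav, haw⟩ := hT
    have hcyc := det2_mul_dotR_add_add u v w a
    exact div_nonneg (by nlinarith) (mul_pos hy hz).le
  refine ⟨p + (-c) • perp u, p + (0 : ℝ) • perp u, ?_, ?_⟩
  · rw [triangle_edge_eq_image hy hz hpu hpv, hc,
      image_add_smul_Icc _ _ (neg_nonpos.mpr hc_nonneg)]
  · have hdiff : (p + (-c) • perp u).1 - (p + (0 : ℝ) • perp u).1 = c * u.2 ∧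
        (p + (-c) • perp u).2 - (p + (0 : ℝ) • perp u).2 = -(c * u.1) := by
      simp [perp]
    rw [hdiff.1, hdiff.2, show (c * u.2) ^ 2 + (-(c * u.1)) ^ 2 = c ^ 2 * (u.1 ^ 2 + u.2 ^ 2) by ring,
      Real.sqrt_mul (sq_nonneg c), Real.sqrt_sq hc_nonneg]

theorem stmt_15_general (u v w : ℤ × ℤ)
    (x y z : ℤ)
    (hxd : x = v.1 * w.2 - v.2 * w.1)
    (hyd : y = w.1 * u.2 - w.2 * u.1)
    (hzd : z = u.1 * v.2 - u.2 * v.1)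
    (hx : 0 < x) (hy : 0 < y) (hz : 0 < z)
    (α β γ : ℚ) (T : Set (ℝ × ℝ))
    (hT : T = {a : ℝ × ℝ | dotR (zpt u) a ≤ (α : ℝ) ∧ dotR (zpt v) a ≤ (β : ℝ) ∧
      dotR (zpt w) a ≤ (γ : ℝ)})
    (hne : (interior T).Nonempty)
    (E : Set (ℝ × ℝ)) (hE : E = {a ∈ T | dotR (zpt u) a = (α : ℝ)}) :
    ∃ p q : ℝ × ℝ, E = segment ℝ p q ∧
      Real.sqrt ((p.1 - q.1) ^ 2 + (p.2 - q.2) ^ 2) =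
        (((α : ℝ) * (x : ℝ) + (β : ℝ) * (y : ℝ) + (γ : ℝ) * (z : ℝ)) /
            ((x : ℝ) * (y : ℝ) * (z : ℝ))) * (x : ℝ) *
          Real.sqrt ((u.1 : ℝ) ^ 2 + (u.2 : ℝ) ^ 2) := by
  have hx' : (x : ℝ) = det2 (zpt v) (zpt w) := by simp [hxd, det2, zpt]
  have hy' : (y : ℝ) = det2 (zpt w) (zpt u) := by simp [hyd, det2, zpt]
  have hz' : (z : ℝ) = det2 (zpt u) (zpt v) := by simp [hzd, det2, zpt]
  have hxpos : (0 : ℝ) < x := by exact_mod_cast hx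
  have hypos : (0 : ℝ) < y := by exact_mod_cast hy
  have hzpos : (0 : ℝ) < z := by exact_mod_cast hz
  subst hT hE
  obtain ⟨p, q, hpq, hlen⟩ := triangle_edge_eq_segment (hx' ▸ hxpos) (hy' ▸ hypos) (hz' ▸ hzpos)
    (hne.mono interior_subset)
  refine ⟨p, q, hpq, ?_⟩
  rw [hlen, ← hx', ← hy', ← hz']
  simp only [zpt]
  field_simp

/-- for a rational triangle
`T = {a : ⟨u,a⟩ ≤ α, ⟨v,a⟩ ≤ β, ⟨w,a⟩ ≤ γ}` with primitive outer edge normals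
`u, v, w` and `x = det(v,w)`, `y = det(w,u)`, `z = det(u,v)` all positive, the
edge `E = {a ∈ T : ⟨u,a⟩ = α}` is a segment whose Euclidean length equals
`((αx + βy + γz)/(xyz)) · x · ‖u‖` (where `‖u‖` is the Euclidean norm of `u`),
i.e. its lattice length is `((αx + βy + γz) · x)/(xyz)`. -/
theorem stmt_15 (u v w : ℤ × ℤ)
    (hu : IsCoprime u.1 u.2) (hv : IsCoprime v.1 v.2) (hw : IsCoprime w.1 w.2)
    (x y z : ℤ)
    (hxd : x = v.1 * w.2 - v.2 * w.1)
    (hyd : y = w.1 * u.2 - w.2 * u.1)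
    (hzd : z = u.1 * v.2 - u.2 * v.1)
    (hx : 0 < x) (hy : 0 < y) (hz : 0 < z)
    (α β γ : ℚ) (T : Set (ℝ × ℝ))
    (hT : T = {a : ℝ × ℝ | dotR (zpt u) a ≤ (α : ℝ) ∧ dotR (zpt v) a ≤ (β : ℝ) ∧
      dotR (zpt w) a ≤ (γ : ℝ)})
    (hne : (interior T).Nonempty)
    (E : Set (ℝ × ℝ)) (hE : E = {a ∈ T | dotR (zpt u) a = (α : ℝ)}) :
    ∃ p q : ℝ × ℝ, E = segment ℝ p q ∧
      Real.sqrt ((p.1 - q.1) ^ 2 + (p.2 - q.2) ^ 2) =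
        (((α : ℝ) * (x : ℝ) + (β : ℝ) * (y : ℝ) + (γ : ℝ) * (z : ℝ)) /
            ((x : ℝ) * (y : ℝ) * (z : ℝ))) * (x : ℝ) *
          Real.sqrt ((u.1 : ℝ) ^ 2 + (u.2 : ℝ) ^ 2) :=
  stmt_15_general u v w x y z hxd hyd hzd hx hy hz α β γ T hT hne E hE
end

section
/- Let T ⊂ ℝ² be a rational triangle that is pseudointegral and contains exactly one lattice point in its interior, and write T (after a suitable translation placing the interior lattice point at the origin) as T = {a ∈ ℝ² : ⟨u,a⟩ ≤ 1, ⟨v,a⟩ ≤ 1, ⟨w,a⟩ ≤ 1} with u, v, w ∈ ℤ² primitive and x := det(v,w), y := det(w,u), z := det(u,v) all positive. Then the number of lattice points on the boundary of T equals (x + y + z)²/(xyz). -/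
open Set Pointwise

def Dz (p a : ℤ × ℤ) : ℤ := p.1 * a.1 + p.2 * a.2
def Sz (u v w : ℤ × ℤ) (t : ℤ) : Set (ℤ × ℤ) :=
  {a | Dz u a ≤ t ∧ Dz v a ≤ t ∧ Dz w a ≤ t}
def Bdz (u v w : ℤ × ℤ) (t : ℤ) : Set (ℤ × ℤ) := Sz u v w t \ Sz u v w (t-1)

/-- Integer dot product. -/

lemma edge_count (u v w : ℤ × ℤ) (x y z : ℤ)
    (hu : IsCoprime u.1 u.2)
    (hy : 0 < y) (hz : 0 < z) (hxyz : 0 ≤ x + y + z)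
    (hydet : y = w.1 * u.2 - w.2 * u.1)
    (hzdet : z = u.1 * v.2 - u.2 * v.1)
    (hrel1 : x * u.1 + y * v.1 + z * w.1 = 0)
    (hrel2 : x * u.2 + y * v.2 + z * w.2 = 0) :
    ∃ P Q : ℤ, y * P + z * Q = x + y + z ∧
      ∀ t : ℤ, 0 ≤ t →
        ({a : ℤ × ℤ | Dz u a = t ∧ Dz v a ≤ t ∧ Dz w a ≤ t}.ncard : ℤ)
          = (t * P) / z + (t * Q) / y + 1 := by
  obtain ⟨s, r, hsr⟩ := hu
  refine ⟨1 - (v.1 * s + v.2 * r), 1 - (w.1 * s + w.2 * r), ?_, ?_⟩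
  · linear_combination (-s) * hrel1 + (-r) * hrel2 + x * hsr
  intro t ht
  set P := 1 - (v.1 * s + v.2 * r) with hP
  set Q := 1 - (w.1 * s + w.2 * r) with hQ
  set lo := -((t * Q) / y) with hlo
  set hi := (t * P) / z with hhi
  set φ : ℤ → ℤ × ℤ := fun k => (t * s - k * u.2, t * r + k * u.1) with hφ
  have hune : u.1 ≠ 0 ∨ u.2 ≠ 0 := by
    by_contra h
    push_neg at h
    rw [h.1, h.2] at hzdet
    omega
  have hinj : Function.Injective φ := by
    intro k k' hkk
    simp only [hφ, Prod.mk.injEq] at hkk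
    rcases hune with h | h
    · have := hkk.2; exact mul_right_cancel₀ h (by omega)
    · have := hkk.1; exact mul_right_cancel₀ h (by omega)
  have hset : {a : ℤ × ℤ | Dz u a = t ∧ Dz v a ≤ t ∧ Dz w a ≤ t}
      = φ '' ↑(Finset.Icc lo hi) := by
    ext a
    simp only [Set.mem_setOf_eq, Set.mem_image, Finset.coe_Icc, Set.mem_Icc, Dz]
    constructor
    · rintro ⟨ha, hav, haw⟩
      have hb : u.1 * (a.1 - t * s) + u.2 * (a.2 - t * r) = 0 := by
        linear_combination ha - t * hsr
      set k : ℤ := s * (a.2 - t * r) - r * (a.1 - t * s) with hk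
      have hk1 : k * u.1 = a.2 - t * r := by
        linear_combination (a.2 - t * r) * hsr - r * hb
      have hk2 : k * u.2 = -(a.1 - t * s) := by
        linear_combination s * hb - (a.1 - t * s) * hsr
      have hA1 : a.1 = t * s - k * u.2 := by linear_combination hk2
      have hA2 : a.2 = t * r + k * u.1 := by linear_combination -hk1
      have hφk : φ k = a := by
        simp only [hφ, Prod.ext_iff]
        exact ⟨hA1.symm, hA2.symm⟩
      refine ⟨k, ⟨?_, ?_⟩, hφk⟩
      · -- lo ≤ k  from  Dz w a ≤ t
        have hDw : w.1 * a.1 + w.2 * a.2 = t * (w.1 * s + w.2 * r) - k * y := by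
          linear_combination w.1 * hA1 + w.2 * hA2 + k * hydet
        have h1 : -k * y ≤ t * Q := by
          rw [hQ]; linear_combination haw - hDw
        have := (Int.le_ediv_iff_mul_le hy (a := -k) (b := t * Q)).2 h1
        omega
      · -- k ≤ hi  from  Dz v a ≤ t
        have hDv : v.1 * a.1 + v.2 * a.2 = t * (v.1 * s + v.2 * r) + k * z := by
          linear_combination v.1 * hA1 + v.2 * hA2 - k * hzdet
        exact (Int.le_ediv_iff_mul_le hz).2 (by rw [hP]; linear_combination hav - hDv)
    · rintro ⟨k, ⟨hk1, hk2⟩, rfl⟩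
      have hDu : u.1 * (t * s - k * u.2) + u.2 * (t * r + k * u.1) = t := by
        linear_combination t * hsr
      have hkz : k * z ≤ t * P := (Int.le_ediv_iff_mul_le hz).1 hk2
      have hky : -k * y ≤ t * Q := (Int.le_ediv_iff_mul_le hy).1 (by omega)
      refine ⟨hDu, ?_, ?_⟩
      · rw [hP] at hkz; linear_combination hkz - k * hzdet
      · rw [hQ] at hky; linear_combination hky + k * hydet
  rw [hset, Set.ncard_image_of_injective _ hinj, Set.ncard_coe_finset, Int.card_Icc]
  have hb1 := Int.mul_ediv_add_emod (t * P) z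
  have hb2 := Int.emod_nonneg (t * P) (ne_of_gt hz)
  have hb3 := Int.emod_lt_of_pos (t * P) hz
  have hc1 := Int.mul_ediv_add_emod (t * Q) y
  have hc2 := Int.emod_nonneg (t * Q) (ne_of_gt hy)
  have hc3 := Int.emod_lt_of_pos (t * Q) hy
  have hsum : y * (t * P) + z * (t * Q) = t * (x + y + z) := by
    rw [hP, hQ]
    linear_combination (-t*s) * hrel1 + (-t*r) * hrel2 + t*x * hsr
  have hAB : -2 < (t * P) / z + (t * Q) / y := by
    nlinarith [mul_nonneg ht hxyz, mul_pos hy hz]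
  have hnn : (0:ℤ) ≤ hi + 1 - lo := by rw [hhi, hlo]; omega
  rw [Int.toNat_of_nonneg hnn, hhi, hlo]
  ring

lemma vertex_count (u v w : ℤ × ℤ) (x y z : ℤ)
    (hz : 0 < z) (hxy : 0 ≤ x + y)
    (hxd : x = v.1 * w.2 - v.2 * w.1)
    (hyd : y = w.1 * u.2 - w.2 * u.1)
    (hzd : z = u.1 * v.2 - u.2 * v.1)
    (t : ℤ) (ht : 0 ≤ t) :
    ({a : ℤ × ℤ | Dz u a = t ∧ Dz v a = t ∧ Dz w a ≤ t}.ncard)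
      = if z ∣ t * (v.2 - u.2) ∧ z ∣ t * (u.1 - v.1) then 1 else 0 := by
  have hz0 : z ≠ 0 := ne_of_gt hz
  split_ifs with hdvd
  · obtain ⟨⟨m, hm⟩, ⟨n, hn⟩⟩ := hdvd
    have hset : {a : ℤ × ℤ | Dz u a = t ∧ Dz v a = t ∧ Dz w a ≤ t} = {(m, n)} := by
      ext b
      simp only [Set.mem_setOf_eq, Set.mem_singleton_iff, Prod.ext_iff, Dz]
      constructor
      · rintro ⟨h1, h2, _⟩
        constructor
        · have : z * b.1 = z * m := by linear_combination v.2 * h1 - u.2 * h2 + b.1 * hzd + hm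
          exact mul_left_cancel₀ hz0 this
        · have : z * b.2 = z * n := by linear_combination u.1 * h2 - v.1 * h1 + b.2 * hzd + hn
          exact mul_left_cancel₀ hz0 this
      · rintro ⟨h1, h2⟩
        refine ⟨?_, ?_, ?_⟩
        · have : z * (u.1 * b.1 + u.2 * b.2) = z * t := by
            rw [h1, h2]; linear_combination (-u.1) * hm - u.2 * hn - t * hzd
          exact mul_left_cancel₀ hz0 this
        · have : z * (v.1 * b.1 + v.2 * b.2) = z * t := by
            rw [h1, h2]; linear_combination (-v.1) * hm - v.2 * hn - t * hzd
          exact mul_left_cancel₀ hz0 this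
        · have hw : z * (w.1 * b.1 + w.2 * b.2) = -t * (x + y) := by
            rw [h1, h2]
            linear_combination (-w.1) * hm - w.2 * hn + t * hxd + t * hyd
          have h2 : z * (w.1 * b.1 + w.2 * b.2) ≤ z * t := by
            rw [hw]; nlinarith
          exact le_of_mul_le_mul_left h2 hz
    rw [hset, Set.ncard_singleton]
  · convert Set.ncard_empty (ℤ × ℤ)
    rw [Set.eq_empty_iff_forall_notMem]
    rintro b ⟨h1, h2, _⟩
    simp only [Dz] at h1 h2
    exact hdvd ⟨⟨b.1, by linear_combination (-v.2) * h1 + u.2 * h2 - b.1 * hzd⟩,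
      ⟨b.2, by linear_combination v.1 * h1 - u.1 * h2 - b.2 * hzd⟩⟩

lemma sub_finite (u v w : ℤ × ℤ) (x y z : ℤ)
    (hx : 0 < x) (hy : 0 < y) (hz : 0 < z)
    (hzd : z = u.1 * v.2 - u.2 * v.1)
    (hrel1 : x * u.1 + y * v.1 + z * w.1 = 0)
    (hrel2 : x * u.2 + y * v.2 + z * w.2 = 0)
    (t : ℤ) (ht : 0 ≤ t)
    (S : Set (ℤ × ℤ)) (hS : S ⊆ {a | Dz u a ≤ t ∧ Dz v a ≤ t ∧ Dz w a ≤ t}) :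
    S.Finite := by
  have hz0 : z ≠ 0 := ne_of_gt hz
  apply Set.Finite.of_finite_image (f := fun a => (Dz u a, Dz v a))
  · apply Set.Finite.subset (Set.finite_Icc (-(y+z)*t, -(x+z)*t) (t, t))
    rintro p ⟨a, ha, rfl⟩
    obtain ⟨h1, h2, h3⟩ := hS ha
    have hre : x * Dz u a + y * Dz v a + z * Dz w a = 0 := by
      simp only [Dz]; linear_combination a.1 * hrel1 + a.2 * hrel2
    refine ⟨⟨?_, ?_⟩, ⟨h1, h2⟩⟩
    · show -(y+z)*t ≤ Dz u a
      have hxd2 : x * Dz u a ≥ -(y+z)*t := by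
        nlinarith [mul_le_mul_of_nonneg_left h2 (le_of_lt hy),
          mul_le_mul_of_nonneg_left h3 (le_of_lt hz)]
      by_contra hcon
      push_neg at hcon
      have hneg : Dz u a < 0 := by nlinarith
      nlinarith [mul_nonpos_of_nonneg_of_nonpos (by omega : (0:ℤ) ≤ x - 1) (le_of_lt hneg)]
    · show -(x+z)*t ≤ Dz v a
      have hyd2 : y * Dz v a ≥ -(x+z)*t := by
        nlinarith [mul_le_mul_of_nonneg_left h1 (le_of_lt hx),
          mul_le_mul_of_nonneg_left h3 (le_of_lt hz)]
      by_contra hcon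
      push_neg at hcon
      have hneg : Dz v a < 0 := by nlinarith
      nlinarith [mul_nonpos_of_nonneg_of_nonpos (by omega : (0:ℤ) ≤ y - 1) (le_of_lt hneg)]
  · rintro a - b - hab
    simp only [Prod.mk.injEq] at hab
    obtain ⟨h1, h2⟩ := hab
    simp only [Dz] at h1 h2
    have e1 : z * a.1 = z * b.1 := by
      linear_combination v.2 * h1 - u.2 * h2 + (a.1 - b.1) * hzd
    have e2 : z * a.2 = z * b.2 := by
      linear_combination u.1 * h2 - v.1 * h1 + (a.2 - b.2) * hzd
    exact Prod.ext (mul_left_cancel₀ hz0 e1) (mul_left_cancel₀ hz0 e2)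

section BD
variable (u v w : ℤ × ℤ) (x y z : ℤ)

lemma bd_formula
    (hu : IsCoprime u.1 u.2) (hv : IsCoprime v.1 v.2) (hw : IsCoprime w.1 w.2)
    (hx : 0 < x) (hy : 0 < y) (hz : 0 < z)
    (hxd : x = v.1 * w.2 - v.2 * w.1)
    (hyd : y = w.1 * u.2 - w.2 * u.1)
    (hzd : z = u.1 * v.2 - u.2 * v.1) :
    ∃ P₁ Q₁ P₂ Q₂ P₃ Q₃ : ℤ,
      y*P₁ + z*Q₁ = x+y+z ∧ z*P₂ + x*Q₂ = x+y+z ∧ x*P₃ + y*Q₃ = x+y+z ∧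
      ∀ t : ℤ, 1 ≤ t → ((Bdz u v w t).ncard : ℤ) =
        (t*P₁)/z + (t*Q₁)/y + (t*P₂)/x + (t*Q₂)/z + (t*P₃)/y + (t*Q₃)/x + 3
        - (if z ∣ t*(v.2-u.2) ∧ z ∣ t*(u.1-v.1) then 1 else 0)
        - (if x ∣ t*(w.2-v.2) ∧ x ∣ t*(v.1-w.1) then 1 else 0)
        - (if y ∣ t*(u.2-w.2) ∧ y ∣ t*(w.1-u.1) then 1 else 0) := by
  have hrel1 : x * u.1 + y * v.1 + z * w.1 = 0 := by rw [hxd, hyd, hzd]; ring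
  have hrel2 : x * u.2 + y * v.2 + z * w.2 = 0 := by rw [hxd, hyd, hzd]; ring
  have hrel1' : y * v.1 + z * w.1 + x * u.1 = 0 := by linarith
  have hrel2' : y * v.2 + z * w.2 + x * u.2 = 0 := by linarith
  have hrel1'' : z * w.1 + x * u.1 + y * v.1 = 0 := by linarith
  have hrel2'' : z * w.2 + x * u.2 + y * v.2 = 0 := by linarith
  obtain ⟨P₁, Q₁, hPQ₁, hE₁⟩ := edge_count u v w x y z hu hy hz (by omega) hyd hzd hrel1 hrel2
  obtain ⟨P₂, Q₂, hPQ₂, hE₂⟩ := edge_count v w u y z x hv hz hx (by omega) hzd hxd hrel1' hrel2'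
  obtain ⟨P₃, Q₃, hPQ₃, hE₃⟩ := edge_count w u v z x y hw hx hy (by omega) hxd hyd hrel1'' hrel2''
  refine ⟨P₁, Q₁, P₂, Q₂, P₃, Q₃, by linarith, by linarith, by linarith, ?_⟩
  intro t ht
  have ht0 : (0:ℤ) ≤ t := by omega
  set A1 := {a : ℤ × ℤ | Dz u a = t ∧ Dz v a ≤ t ∧ Dz w a ≤ t} with hA1
  set A2 := {a : ℤ × ℤ | Dz v a = t ∧ Dz w a ≤ t ∧ Dz u a ≤ t} with hA2
  set A3 := {a : ℤ × ℤ | Dz w a = t ∧ Dz u a ≤ t ∧ Dz v a ≤ t} with hA3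
  have hfin : ∀ S : Set (ℤ × ℤ), S ⊆ Sz u v w t → S.Finite := fun S hS =>
    sub_finite u v w x y z hx hy hz hzd hrel1 hrel2 t ht0 S hS
  have hf1 : A1.Finite := hfin A1 (fun a ha => ⟨le_of_eq ha.1, ha.2.1, ha.2.2⟩)
  have hf2 : A2.Finite := hfin A2 (fun a ha => ⟨ha.2.2, le_of_eq ha.1, ha.2.1⟩)
  have hf3 : A3.Finite := hfin A3 (fun a ha => ⟨ha.2.1, ha.2.2, le_of_eq ha.1⟩)
  have hBd : Bdz u v w t = A1 ∪ (A2 ∪ A3) := by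
    ext a
    simp only [Bdz, Sz, Set.mem_diff, Set.mem_setOf_eq, Set.mem_union, hA1, hA2, hA3]
    omega
  have hI12 : A1 ∩ A2 = {a : ℤ × ℤ | Dz u a = t ∧ Dz v a = t ∧ Dz w a ≤ t} := by
    ext a
    simp only [Set.mem_inter_iff, Set.mem_setOf_eq, hA1, hA2]
    omega
  have hI23 : A2 ∩ A3 = {a : ℤ × ℤ | Dz v a = t ∧ Dz w a = t ∧ Dz u a ≤ t} := by
    ext a
    simp only [Set.mem_inter_iff, Set.mem_setOf_eq, hA2, hA3]
    omega
  have hI13 : A1 ∩ A3 = {a : ℤ × ℤ | Dz w a = t ∧ Dz u a = t ∧ Dz v a ≤ t} := by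
    ext a
    simp only [Set.mem_inter_iff, Set.mem_setOf_eq, hA1, hA3]
    omega
  have hdistr : A1 ∩ (A2 ∪ A3) = (A1 ∩ A2) ∪ (A1 ∩ A3) := Set.inter_union_distrib_left A1 A2 A3
  have hempty : (A1 ∩ A2) ∩ (A1 ∩ A3) = ∅ := by
    rw [Set.eq_empty_iff_forall_notMem]
    rintro a ⟨⟨h1, h2⟩, -, h3⟩
    simp only [hA1, hA2, hA3, Set.mem_setOf_eq] at h1 h2 h3
    have hre : x * Dz u a + y * Dz v a + z * Dz w a = 0 := by
      simp only [Dz]; linear_combination a.1 * hrel1 + a.2 * hrel2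
    rw [h1.1, h2.1, h3.1] at hre
    nlinarith
  have f1 : (A1 ∪ (A2 ∪ A3)).ncard + (A1 ∩ (A2 ∪ A3)).ncard = A1.ncard + (A2 ∪ A3).ncard :=
    Set.ncard_union_add_ncard_inter _ _ hf1 (hf2.union hf3)
  have f2 : (A2 ∪ A3).ncard + (A2 ∩ A3).ncard = A2.ncard + A3.ncard :=
    Set.ncard_union_add_ncard_inter _ _ hf2 hf3
  have f3 : ((A1 ∩ A2) ∪ (A1 ∩ A3)).ncard + ((A1 ∩ A2) ∩ (A1 ∩ A3)).ncard
      = (A1 ∩ A2).ncard + (A1 ∩ A3).ncard :=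
    Set.ncard_union_add_ncard_inter _ _ (hf1.subset Set.inter_subset_left)
      (hf1.subset Set.inter_subset_left)
  rw [hempty, Set.ncard_empty] at f3
  rw [hdistr] at f1
  -- elementary counts
  have c1 : (A1.ncard : ℤ) = (t*P₁)/z + (t*Q₁)/y + 1 := hE₁ t ht0
  have c2 : (A2.ncard : ℤ) = (t*P₂)/x + (t*Q₂)/z + 1 := hE₂ t ht0
  have c3 : (A3.ncard : ℤ) = (t*P₃)/y + (t*Q₃)/x + 1 := hE₃ t ht0
  have d1 : ((A1 ∩ A2).ncard : ℤ) = if z ∣ t*(v.2-u.2) ∧ z ∣ t*(u.1-v.1) then 1 else 0 := by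
    rw [hI12, vertex_count u v w x y z hz (by omega) hxd hyd hzd t ht0]
    split_ifs <;> simp
  have d2 : ((A2 ∩ A3).ncard : ℤ) = if x ∣ t*(w.2-v.2) ∧ x ∣ t*(v.1-w.1) then 1 else 0 := by
    rw [hI23, vertex_count v w u y z x hx (by omega) hyd hzd hxd t ht0]
    split_ifs <;> simp
  have d3 : ((A1 ∩ A3).ncard : ℤ) = if y ∣ t*(u.2-w.2) ∧ y ∣ t*(w.1-u.1) then 1 else 0 := by
    rw [hI13, vertex_count w u v z x y hy (by omega) hzd hxd hyd t ht0]
    split_ifs <;> simp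
  rw [hBd]
  have f1' := congrArg (Nat.cast : ℕ → ℤ) f1
  have f2' := congrArg (Nat.cast : ℕ → ℤ) f2
  have f3' := congrArg (Nat.cast : ℕ → ℤ) f3
  push_cast at f1' f2' f3'
  linarith [f1', f2', f3', c1, c2, c3, d1, d2, d3]

end BD

section CORE
variable (u v w : ℤ × ℤ) (x y z : ℤ)

lemma core1 (hx : 0 < x) (hy : 0 < y) (hz : 0 < z)
    (hzd : z = u.1 * v.2 - u.2 * v.1)
    (hrel1 : x * u.1 + y * v.1 + z * w.1 = 0)
    (hrel2 : x * u.2 + y * v.2 + z * w.2 = 0) :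
    ∀ t : ℤ, 0 ≤ t → ((Sz u v w t).ncard : ℤ)
      = (Sz u v w (t-1)).ncard + (Bdz u v w t).ncard := by
  intro t ht
  have hsub : Sz u v w (t-1) ⊆ Sz u v w t := by
    intro a ha
    simp only [Sz, Set.mem_setOf_eq] at ha ⊢
    omega
  have hfin : (Sz u v w t).Finite :=
    sub_finite u v w x y z hx hy hz hzd hrel1 hrel2 t ht _ (subset_refl _)
  have := Set.ncard_diff_add_ncard_of_subset hsub hfin
  have h2 := congrArg (Nat.cast : ℕ → ℤ) this
  push_cast at h2
  rw [Bdz]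
  linarith

lemma dvd_period (z t M c : ℤ) (hM : z ∣ M) : z ∣ (t + M)*c ↔ z ∣ t*c := by
  obtain ⟨m, rfl⟩ := hM
  constructor
  · intro h
    have h2 : z ∣ (m*c)*z := dvd_mul_left z _
    have h3 := dvd_sub h h2
    have : (t + z*m)*c - (m*c)*z = t*c := by ring
    rwa [this] at h3
  · intro h
    have h2 : z ∣ (m*c)*z := dvd_mul_left z _
    have h3 := dvd_add h h2
    have : t*c + (m*c)*z = (t + z*m)*c := by ring
    rwa [this] at h3

lemma core23
    (hu : IsCoprime u.1 u.2) (hv : IsCoprime v.1 v.2) (hw : IsCoprime w.1 w.2)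
    (hx : 0 < x) (hy : 0 < y) (hz : 0 < z)
    (hxd : x = v.1 * w.2 - v.2 * w.1)
    (hyd : y = w.1 * u.2 - w.2 * u.1)
    (hzd : z = u.1 * v.2 - u.2 * v.1) :
    (∀ t : ℤ, 1 ≤ t → ((Bdz u v w (t + x*y*z)).ncard : ℤ)
        = (Bdz u v w t).ncard + (x+y+z)^2) ∧
    (∀ k : ℤ, 1 ≤ k → ((Bdz u v w (k*(x*y*z))).ncard : ℤ) = k*(x+y+z)^2) := by
  obtain ⟨P₁, Q₁, P₂, Q₂, P₃, Q₃, h1, h2, h3, hF⟩ :=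
    bd_formula u v w x y z hu hv hw hx hy hz hxd hyd hzd
  have hM : (1:ℤ) ≤ x*y*z := by
    have := Int.lt_iff_add_one_le.mp (mul_pos (mul_pos hx hy) hz); linarith
  constructor
  · intro t ht
    have e1 : ((t + x*y*z)*P₁)/z = (t*P₁)/z + x*y*P₁ := by
      rw [show (t + x*y*z)*P₁ = t*P₁ + (x*y*P₁)*z by ring, Int.add_mul_ediv_right _ _ hz.ne']
    have e2 : ((t + x*y*z)*Q₁)/y = (t*Q₁)/y + x*z*Q₁ := by
      rw [show (t + x*y*z)*Q₁ = t*Q₁ + (x*z*Q₁)*y by ring, Int.add_mul_ediv_right _ _ hy.ne']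
    have e3 : ((t + x*y*z)*P₂)/x = (t*P₂)/x + y*z*P₂ := by
      rw [show (t + x*y*z)*P₂ = t*P₂ + (y*z*P₂)*x by ring, Int.add_mul_ediv_right _ _ hx.ne']
    have e4 : ((t + x*y*z)*Q₂)/z = (t*Q₂)/z + x*y*Q₂ := by
      rw [show (t + x*y*z)*Q₂ = t*Q₂ + (x*y*Q₂)*z by ring, Int.add_mul_ediv_right _ _ hz.ne']
    have e5 : ((t + x*y*z)*P₃)/y = (t*P₃)/y + x*z*P₃ := by
      rw [show (t + x*y*z)*P₃ = t*P₃ + (x*z*P₃)*y by ring, Int.add_mul_ediv_right _ _ hy.ne']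
    have e6 : ((t + x*y*z)*Q₃)/x = (t*Q₃)/x + y*z*Q₃ := by
      rw [show (t + x*y*z)*Q₃ = t*Q₃ + (y*z*Q₃)*x by ring, Int.add_mul_ediv_right _ _ hx.ne']
    rw [hF (t + x*y*z) (by omega), hF t ht, e1, e2, e3, e4, e5, e6]
    rw [if_congr (and_congr (dvd_period z t (x*y*z) _ ⟨x*y, by ring⟩)
          (dvd_period z t (x*y*z) _ ⟨x*y, by ring⟩)) rfl rfl,
        if_congr (and_congr (dvd_period x t (x*y*z) _ ⟨y*z, by ring⟩)
          (dvd_period x t (x*y*z) _ ⟨y*z, by ring⟩)) rfl rfl,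
        if_congr (and_congr (dvd_period y t (x*y*z) _ ⟨x*z, by ring⟩)
          (dvd_period y t (x*y*z) _ ⟨x*z, by ring⟩)) rfl rfl]
    linear_combination x*h1 + y*h2 + z*h3
  · intro k hk
    have e1 : (k*(x*y*z)*P₁)/z = k*x*y*P₁ := by
      rw [show k*(x*y*z)*P₁ = (k*x*y*P₁)*z by ring, Int.mul_ediv_cancel _ hz.ne']
    have e2 : (k*(x*y*z)*Q₁)/y = k*x*z*Q₁ := by
      rw [show k*(x*y*z)*Q₁ = (k*x*z*Q₁)*y by ring, Int.mul_ediv_cancel _ hy.ne']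
    have e3 : (k*(x*y*z)*P₂)/x = k*y*z*P₂ := by
      rw [show k*(x*y*z)*P₂ = (k*y*z*P₂)*x by ring, Int.mul_ediv_cancel _ hx.ne']
    have e4 : (k*(x*y*z)*Q₂)/z = k*x*y*Q₂ := by
      rw [show k*(x*y*z)*Q₂ = (k*x*y*Q₂)*z by ring, Int.mul_ediv_cancel _ hz.ne']
    have e5 : (k*(x*y*z)*P₃)/y = k*x*z*P₃ := by
      rw [show k*(x*y*z)*P₃ = (k*x*z*P₃)*y by ring, Int.mul_ediv_cancel _ hy.ne']
    have e6 : (k*(x*y*z)*Q₃)/x = k*y*z*Q₃ := by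
      rw [show k*(x*y*z)*Q₃ = (k*y*z*Q₃)*x by ring, Int.mul_ediv_cancel _ hx.ne']
    have hkM : (1:ℤ) ≤ k*(x*y*z) := by
      have h := mul_le_mul_of_nonneg_left hM (by linarith : (0:ℤ) ≤ k); linarith
    rw [hF (k*(x*y*z)) hkM, e1, e2, e3, e4, e5, e6,
      if_pos ⟨⟨k*x*y*(v.2-u.2), by ring⟩, ⟨k*x*y*(u.1-v.1), by ring⟩⟩,
      if_pos ⟨⟨k*y*z*(w.2-v.2), by ring⟩, ⟨k*y*z*(v.1-w.1), by ring⟩⟩,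
      if_pos ⟨⟨k*x*z*(u.2-w.2), by ring⟩, ⟨k*x*z*(w.1-u.1), by ring⟩⟩]
    linear_combination k*x*h1 + k*y*h2 + k*z*h3

end CORE

lemma zpt_injective : Function.Injective zpt := by
  intro a b h
  simp only [zpt, Prod.mk.injEq, Int.cast_inj] at h
  exact Prod.ext h.1 h.2

lemma dotR_zpt (p a : ℤ × ℤ) : dotR (zpt p) (zpt a) = (Dz p a : ℝ) := by
  simp only [dotR, zpt, Dz]
  push_cast
  ring

lemma dotR_smul (U : ℝ × ℝ) (c : ℝ) (p : ℝ × ℝ) : dotR U (c • p) = c * dotR U p := by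
  simp only [dotR, Prod.smul_fst, Prod.smul_snd, smul_eq_mul]
  ring

lemma inv_mul_le_one_iff' (tR d : ℝ) (ht : 0 < tR) : tR⁻¹ * d ≤ 1 ↔ d ≤ tR := by
  rw [← div_eq_inv_mul, div_le_one ht]

lemma smul_lattice (u v w : ℤ × ℤ) (T : Set (ℝ × ℝ))
    (hT : T = {a : ℝ × ℝ | dotR (zpt u) a ≤ 1 ∧ dotR (zpt v) a ≤ 1 ∧ dotR (zpt w) a ≤ 1})
    (t : ℕ) (ht : 0 < t) :
    ((t : ℝ) • T) ∩ latticePts = zpt '' (Sz u v w t) := by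
  have htR : (0:ℝ) < t := by exact_mod_cast ht
  ext p
  simp only [Set.mem_inter_iff, latticePts, Set.mem_setOf_eq, Set.mem_image]
  constructor
  · rintro ⟨hp1, m, n, rfl⟩
    rw [Set.mem_smul_set_iff_inv_smul_mem₀ (ne_of_gt htR), hT] at hp1
    have hzz : ((m:ℝ), (n:ℝ)) = zpt (m, n) := rfl
    rw [hzz] at hp1
    obtain ⟨h1, h2, h3⟩ := hp1
    refine ⟨(m, n), ?_, rfl⟩
    have key : ∀ U : ℤ × ℤ, dotR (zpt U) ((t:ℝ)⁻¹ • (zpt (m,n))) ≤ 1 → Dz U (m,n) ≤ t := by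
      intro U hU
      rw [dotR_smul, dotR_zpt, inv_mul_le_one_iff' _ _ htR] at hU
      exact_mod_cast hU
    exact ⟨key u h1, key v h2, key w h3⟩
  · rintro ⟨a, ⟨h1, h2, h3⟩, rfl⟩
    refine ⟨?_, a.1, a.2, rfl⟩
    rw [Set.mem_smul_set_iff_inv_smul_mem₀ (ne_of_gt htR), hT]
    have key : ∀ U : ℤ × ℤ, Dz U a ≤ t → dotR (zpt U) ((t:ℝ)⁻¹ • (zpt a)) ≤ 1 := by
      intro U hU
      rw [dotR_smul, dotR_zpt, inv_mul_le_one_iff' _ _ htR]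
      exact_mod_cast hU
    exact ⟨key u h1, key v h2, key w h3⟩

lemma interior_halfplane (U : ℝ × ℝ) (hU : U.1 ≠ 0 ∨ U.2 ≠ 0) :
    interior {p : ℝ × ℝ | dotR U p ≤ 1} = {p | dotR U p < 1} := by
  have hcont : Continuous fun p : ℝ × ℝ => dotR U p := by
    simp only [dotR]; fun_prop
  apply subset_antisymm
  · intro p hp
    have hple : dotR U p ≤ 1 := by have := interior_subset hp; simpa using this
    rcases lt_or_eq_of_le hple with h | heq
    · exact h
    · exfalso
      have hmem := mem_interior_iff_mem_nhds.mp hp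
      rcases Metric.mem_nhds_iff.mp hmem with ⟨ε, hε, hball⟩
      set D : ℝ := |U.1| + |U.2| + 1 with hD
      have hDpos : 0 < D := by positivity
      set c : ℝ := ε / (2 * D) with hc
      have hcpos : 0 < c := by positivity
      have hcD : c * D = ε / 2 := by rw [hc]; field_simp
      set p' : ℝ × ℝ := (p.1 + c * U.1, p.2 + c * U.2) with hp'
      have hdist : dist p' p < ε := by
        rw [Prod.dist_eq]
        have e1 : dist p'.1 p.1 = |c * U.1| := by
          rw [Real.dist_eq]; congr 1; simp [hp']
        have e2 : dist p'.2 p.2 = |c * U.2| := by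
          rw [Real.dist_eq]; congr 1; simp [hp']
        rw [e1, e2]
        have b1 : |c * U.1| < ε := by
          rw [abs_mul, abs_of_pos hcpos]
          nlinarith [abs_nonneg U.1, abs_nonneg U.2,
            mul_le_mul_of_nonneg_left (by linarith [abs_nonneg U.2] : |U.1| ≤ D) hcpos.le]
        have b2 : |c * U.2| < ε := by
          rw [abs_mul, abs_of_pos hcpos]
          nlinarith [abs_nonneg U.1, abs_nonneg U.2,
            mul_le_mul_of_nonneg_left (by linarith [abs_nonneg U.1] : |U.2| ≤ D) hcpos.le]
        exact max_lt b1 b2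
      have hp'mem : dotR U p' ≤ 1 := hball (Metric.mem_ball.mpr hdist)
      have hval : dotR U p' = 1 + c * (U.1^2 + U.2^2) := by
        simp only [dotR, hp'] at heq ⊢
        linear_combination heq
      have hposU : 0 < U.1^2 + U.2^2 := by
        rcases hU with h | h
        · have := lt_of_le_of_ne (sq_nonneg U.1) (Ne.symm (pow_ne_zero 2 h))
          nlinarith [sq_nonneg U.2]
        · have := lt_of_le_of_ne (sq_nonneg U.2) (Ne.symm (pow_ne_zero 2 h))
          nlinarith [sq_nonneg U.1]
      nlinarith
  · refine interior_maximal ?_ (isOpen_lt hcont continuous_const)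
    intro p hp
    show dotR U p ≤ 1
    exact (show dotR U p < 1 from hp).le

/-- a rational pseudointegral triangle
`T = {a : ⟨u,a⟩ ≤ 1, ⟨v,a⟩ ≤ 1, ⟨w,a⟩ ≤ 1}` (normals primitive,
`x = det(v,w)`, `y = det(w,u)`, `z = det(u,v)` positive) with exactly one
interior lattice point has exactly `(x + y + z)²/(xyz)` boundary lattice
points. -/
theorem stmt_17 (u v w : ℤ × ℤ)
    (hu : IsCoprime u.1 u.2) (hv : IsCoprime v.1 v.2) (hw : IsCoprime w.1 w.2)
    (x y z : ℤ)
    (hxd : x = v.1 * w.2 - v.2 * w.1)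
    (hyd : y = w.1 * u.2 - w.2 * u.1)
    (hzd : z = u.1 * v.2 - u.2 * v.1)
    (hx : 0 < x) (hy : 0 < y) (hz : 0 < z)
    (T : Set (ℝ × ℝ))
    (hT : T = {a : ℝ × ℝ | dotR (zpt u) a ≤ 1 ∧ dotR (zpt v) a ≤ 1 ∧
      dotR (zpt w) a ≤ 1})
    (hPIP : IsPIP T)
    (hint : (interior T ∩ latticePts).ncard = 1) :
    ((frontier T ∩ latticePts).ncard : ℚ) =
      ((x : ℚ) + (y : ℚ) + (z : ℚ)) ^ 2 / ((x : ℚ) * (y : ℚ) * (z : ℚ)) := by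
  classical
  have hrel1 : x * u.1 + y * v.1 + z * w.1 = 0 := by rw [hxd, hyd, hzd]; ring
  have hrel2 : x * u.2 + y * v.2 + z * w.2 = 0 := by rw [hxd, hyd, hzd]; ring
  have hu0 : u.1 ≠ 0 ∨ u.2 ≠ 0 := by
    by_contra h; push_neg at h; rw [h.1, h.2] at hzd; omega
  have hv0 : v.1 ≠ 0 ∨ v.2 ≠ 0 := by
    by_contra h; push_neg at h; rw [h.1, h.2] at hzd; omega
  have hw0 : w.1 ≠ 0 ∨ w.2 ≠ 0 := by
    by_contra h; push_neg at h; rw [h.1, h.2] at hxd; omega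
  have hu0' : (zpt u).1 ≠ 0 ∨ (zpt u).2 ≠ 0 :=
    hu0.imp (fun h => Int.cast_ne_zero.mpr h) (fun h => Int.cast_ne_zero.mpr h)
  have hv0' : (zpt v).1 ≠ 0 ∨ (zpt v).2 ≠ 0 :=
    hv0.imp (fun h => Int.cast_ne_zero.mpr h) (fun h => Int.cast_ne_zero.mpr h)
  have hw0' : (zpt w).1 ≠ 0 ∨ (zpt w).2 ≠ 0 :=
    hw0.imp (fun h => Int.cast_ne_zero.mpr h) (fun h => Int.cast_ne_zero.mpr h)
  -- topology of T
  have hsplit : {a : ℝ × ℝ | dotR (zpt u) a ≤ 1 ∧ dotR (zpt v) a ≤ 1 ∧ dotR (zpt w) a ≤ 1}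
      = {a : ℝ × ℝ | dotR (zpt u) a ≤ 1} ∩
        ({a : ℝ × ℝ | dotR (zpt v) a ≤ 1} ∩ {a : ℝ × ℝ | dotR (zpt w) a ≤ 1}) := rfl
  have hcont : ∀ U : ℝ × ℝ, Continuous fun a : ℝ × ℝ => dotR U a := by
    intro U
    simp only [dotR]
    fun_prop
  have hTclosed : IsClosed T := by
    rw [hT, hsplit]
    exact IsClosed.inter (isClosed_le (hcont _) continuous_const)
      (IsClosed.inter (isClosed_le (hcont _) continuous_const)
        (isClosed_le (hcont _) continuous_const))
  have hint_eq : interior T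
      = {a : ℝ × ℝ | dotR (zpt u) a < 1 ∧ dotR (zpt v) a < 1 ∧ dotR (zpt w) a < 1} := by
    rw [hT, hsplit, interior_inter, interior_inter,
      interior_halfplane _ hu0', interior_halfplane _ hv0', interior_halfplane _ hw0']
    rfl
  -- lattice point identifications
  have hTL : T ∩ latticePts = zpt '' (Sz u v w 1) := by
    have h := smul_lattice u v w T hT 1 one_pos
    simpa using h
  have hIL : interior T ∩ latticePts = zpt '' (Sz u v w 0) := by
    rw [hint_eq]
    ext p
    simp only [Set.mem_inter_iff, Set.mem_setOf_eq, latticePts, Set.mem_image, Sz]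
    constructor
    · rintro ⟨⟨h1, h2, h3⟩, m, n, rfl⟩
      have e1 : ((m:ℝ), (n:ℝ)) = zpt (m, n) := rfl
      rw [e1, dotR_zpt] at h1 h2 h3
      refine ⟨(m, n), ⟨?_, ?_, ?_⟩, rfl⟩
      · have : Dz u (m, n) < 1 := by exact_mod_cast h1
        omega
      · have : Dz v (m, n) < 1 := by exact_mod_cast h2
        omega
      · have : Dz w (m, n) < 1 := by exact_mod_cast h3
        omega
    · rintro ⟨a, ⟨h1, h2, h3⟩, rfl⟩
      refine ⟨⟨?_, ?_, ?_⟩, a.1, a.2, rfl⟩ <;> rw [dotR_zpt]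
      · exact_mod_cast (by omega : Dz u a < 1)
      · exact_mod_cast (by omega : Dz v a < 1)
      · exact_mod_cast (by omega : Dz w a < 1)
  have hfrL : frontier T ∩ latticePts = zpt '' (Bdz u v w 1) := by
    rw [hTclosed.frontier_eq]
    have hd : (T \ interior T) ∩ latticePts = (T ∩ latticePts) \ (interior T ∩ latticePts) := by
      ext p
      constructor
      · rintro ⟨⟨hpT, hpI⟩, hpL⟩
        exact ⟨⟨hpT, hpL⟩, fun hc => hpI hc.1⟩
      · rintro ⟨⟨hpT, hpL⟩, hnot⟩
        exact ⟨⟨hpT, fun hI => hnot ⟨hI, hpL⟩⟩, hpL⟩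
    rw [hd, hTL, hIL, ← Set.image_diff zpt_injective]
    congr 1
  have hfc : (frontier T ∩ latticePts).ncard = (Bdz u v w 1).ncard := by
    rw [hfrL, Set.ncard_image_of_injective _ zpt_injective]
  -- Ehrhart identification
  have hehr : ∀ t : ℕ, 0 < t → ehr T t = (Sz u v w t).ncard := by
    intro t ht
    unfold ehr
    rw [smul_lattice u v w T hT t ht, Set.ncard_image_of_injective _ zpt_injective]
  obtain ⟨c, hc⟩ := hPIP
  have hpoly : ∀ t : ℤ, 1 ≤ t → ((Sz u v w t).ncard : ℚ) = c.eval (t : ℚ) := by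
    intro t ht
    have h0 : 0 < t.toNat := by omega
    have h1 := hc t.toNat h0
    rw [hehr t.toNat h0] at h1
    have h2 : ((t.toNat : ℕ) : ℤ) = t := Int.toNat_of_nonneg (by omega)
    rw [h2] at h1
    have h3 : ((t.toNat : ℕ) : ℚ) = (t : ℚ) := by exact_mod_cast congrArg (Int.cast : ℤ → ℚ) h2
    rw [h3] at h1
    exact h1
  -- integer core facts
  obtain ⟨hper, hval⟩ := core23 u v w x y z hu hv hw hx hy hz hxd hyd hzd
  have hadd := core1 u v w x y z hx hy hz hzd hrel1 hrel2
  have hM1 : (1:ℤ) ≤ x*y*z := by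
    have := Int.lt_iff_add_one_le.mp (mul_pos (mul_pos hx hy) hz); linarith
  -- the difference polynomial
  set q : Polynomial ℚ := c - c.comp (Polynomial.X - Polynomial.C 1) with hqdef
  have hqeval : ∀ s : ℚ, q.eval s = c.eval s - c.eval (s - 1) := by
    intro s
    simp [hqdef, Polynomial.eval_comp]
  have hq : ∀ t : ℤ, 2 ≤ t → q.eval (t : ℚ) = ((Bdz u v w t).ncard : ℚ) := by
    intro t ht
    have e := hadd t (by omega)
    have e' : ((Sz u v w t).ncard : ℚ)
        = ((Sz u v w (t-1)).ncard : ℚ) + ((Bdz u v w t).ncard : ℚ) := by exact_mod_cast e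
    have p1 := hpoly t (by omega)
    have p2 := hpoly (t-1) (by omega)
    push_cast at p2
    rw [hqeval]
    linarith [e', p1, p2]
  have hqv : ∀ k : ℤ, 2 ≤ k → q.eval ((k : ℚ) * ((x*y*z : ℤ) : ℚ))
      = (k : ℚ) * (((x+y+z)^2 : ℤ) : ℚ) := by
    intro k hk
    have hkM : (2:ℤ) ≤ k*(x*y*z) := by
      have h := mul_le_mul_of_nonneg_left hM1 (by omega : (0:ℤ) ≤ k); linarith
    have h1 := hq (k*(x*y*z)) hkM
    have h2 := hval k (by omega)
    have h3 : ((k*(x*y*z) : ℤ) : ℚ) = (k : ℚ) * ((x*y*z : ℤ) : ℚ) := by push_cast; ring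
    rw [h3] at h1
    rw [h1]
    exact_mod_cast h2
  -- polynomial identity q (M ξ) = K ξ
  set p : Polynomial ℚ :=
    q.comp (Polynomial.C ((x*y*z : ℤ) : ℚ) * Polynomial.X)
      - Polynomial.C (((x+y+z)^2 : ℤ) : ℚ) * Polynomial.X with hpdef
  have hroot : ∀ k : ℤ, 2 ≤ k → p.IsRoot (k : ℚ) := by
    intro k hk
    have h1 := hqv k hk
    simp only [hpdef, Polynomial.IsRoot, Polynomial.eval_sub, Polynomial.eval_comp,
      Polynomial.eval_mul, Polynomial.eval_C, Polynomial.eval_X]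
    rw [mul_comm ((x*y*z : ℤ) : ℚ) (k : ℚ), h1]
    ring
  have hp0 : p = 0 := by
    apply Polynomial.eq_zero_of_infinite_isRoot
    apply Set.infinite_of_injective_forall_mem (f := fun n : ℕ => ((n : ℚ) + 2))
    · intro a b hab
      have : (a : ℚ) = (b : ℚ) := by dsimp at hab; linarith
      exact_mod_cast this
    · intro n
      have h := hroot ((n : ℤ) + 2) (by omega)
      have e : (((n : ℤ) + 2 : ℤ) : ℚ) = (n : ℚ) + 2 := by push_cast; ring
      rw [e] at h
      exact h
  have hqscale : ∀ ξ : ℚ, q.eval (((x*y*z : ℤ) : ℚ) * ξ) = (((x+y+z)^2 : ℤ) : ℚ) * ξ := by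
    intro ξ
    have h := congrArg (Polynomial.eval ξ) hp0
    simp only [hpdef, Polynomial.eval_sub, Polynomial.eval_comp, Polynomial.eval_mul,
      Polynomial.eval_C, Polynomial.eval_X, Polynomial.eval_zero] at h
    linarith
  -- final computation
  have hMQ : ((x*y*z : ℤ) : ℚ) ≠ 0 := by
    have : (x*y*z : ℤ) ≠ 0 := by omega
    exact_mod_cast this
  have hb1 : ((Bdz u v w 1).ncard : ℚ)
      = (((x+y+z)^2 : ℤ) : ℚ) / ((x*y*z : ℤ) : ℚ) := by
    have e1 := hper 1 le_rfl
    have e1' : ((Bdz u v w (1 + x*y*z)).ncard : ℚ)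
        = ((Bdz u v w 1).ncard : ℚ) + (((x+y+z)^2 : ℤ) : ℚ) := by exact_mod_cast e1
    have e2 := hq (1 + x*y*z) (by omega)
    have e2' : (((1 + x*y*z : ℤ)) : ℚ) = 1 + ((x*y*z : ℤ) : ℚ) := by push_cast; ring
    rw [e2'] at e2
    have e3 := hqscale ((1 + ((x*y*z : ℤ) : ℚ)) / ((x*y*z : ℤ) : ℚ))
    rw [mul_div_cancel₀ _ hMQ] at e3
    rw [e3] at e2
    rw [← e2] at e1'
    have e4 : ((Bdz u v w 1).ncard : ℚ)
        = (((x+y+z)^2 : ℤ) : ℚ) * ((1 + ((x*y*z:ℤ):ℚ)) / ((x*y*z:ℤ):ℚ))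
          - (((x+y+z)^2 : ℤ):ℚ) := by linarith [e1']
    rw [e4]
    field_simp
    ring
  rw [hfc, hb1]
  push_cast
  ring
end
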